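/- arXiv:2302.08621 — 3 statements merged into one kernel-verified Lean document; each statement's English description precedes it below -/
import Mathlib

section
/- Let 𝒳, 𝒴 be finite Markov chains, C a cost matrix, δ ∈ (0,1]. For every k ∈ ℕ, lim_{ε→0⁺} d_WL^{δ,ε,(k)}(𝒳,𝒴;C) = d_WL^{δ,(k)}(𝒳,𝒴;C); moreover the limits d_WL^{δ,ε,(∞)} := lim_{k→∞} d_WL^{δ,ε,(k)} and d_WL^{δ,(∞)} := lim_{k→∞} d_WL^{δ,(k)} exist and lim_{ε→0⁺} d_WL^{δ,ε,(∞)}(𝒳,𝒴;C) = d_WL^{δ,(∞)}(𝒳,𝒴;C). -/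
open scoped BigOperators
open Filter Topology

/-- A probability vector on a finite type. -/
def IsProb {X : Type*} [Fintype X] (ν : X → ℝ) : Prop :=
  (∀ x, 0 ≤ ν x) ∧ ∑ x, ν x = 1

/-- `μ` is a coupling of `α` and `β`. -/
def IsCoupling {X Y : Type*} [Fintype X] [Fintype Y]
    (μ : X × Y → ℝ) (α : X → ℝ) (β : Y → ℝ) : Prop :=
  (∀ z, 0 ≤ μ z) ∧ (∀ x, ∑ y, μ (x, y) = α x) ∧ (∀ y, ∑ x, μ (x, y) = β y)

/-- A finite Markov chain: a transition kernel together with an initial distribution. -/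
structure MarkovChain (X : Type*) [Fintype X] where
  kernel : X → X → ℝ
  init : X → ℝ
  kernel_prob : ∀ x, IsProb (kernel x)
  init_prob : IsProb init

/-- A Markovian coupling between two finite Markov chains.  `trans t` is the
transition coupling used from time `t` to time `t+1` (i.e. `m^{(t+1)}`). -/
structure MarkovCoupling {X Y : Type*} [Fintype X] [Fintype Y]
    (MX : MarkovChain X) (MY : MarkovChain Y) where
  init : X × Y → ℝ
  trans : ℕ → X × Y → X × Y → ℝ
  init_coupling : IsCoupling init MX.init MY.init
  trans_coupling : ∀ t xy, IsCoupling (trans t xy) (MX.kernel xy.1) (MY.kernel xy.2)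

/-- Time-`t` law determined by an initial distribution and step kernels. -/
noncomputable def lawAux {X Y : Type*} [Fintype X] [Fintype Y]
    (ν : X × Y → ℝ) (m : ℕ → X × Y → X × Y → ℝ) : ℕ → X × Y → ℝ
  | 0 => ν
  | t + 1 => fun z => ∑ w : X × Y, m t w z * lawAux ν m t w

/-- The time-`t` law of a Markovian coupling. -/
noncomputable def MarkovCoupling.law {X Y : Type*} [Fintype X] [Fintype Y]
    {MX : MarkovChain X} {MY : MarkovChain Y} (π : MarkovCoupling MX MY) :
    ℕ → X × Y → ℝ :=
  lawAux π.init π.trans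

/-- `p` is a probability distribution on `ℕ`. -/
def IsProbNat (p : ℕ → ℝ) : Prop := (∀ t, 0 ≤ p t) ∧ HasSum p 1

/-- The Optimal Transport Markov (OTM) distance associated to `p`. -/
noncomputable def dOTM {X Y : Type*} [Fintype X] [Fintype Y] (p : ℕ → ℝ)
    (MX : MarkovChain X) (MY : MarkovChain Y) (C : X × Y → ℝ) : ℝ :=
  ⨅ π : MarkovCoupling MX MY, ∑' t, p t * ∑ z : X × Y, C z * π.law t z

/-- The entropy-regularized optimal transport cost (`Real.log 0 = 0`, so the
convention `0 · log 0 = 0` holds automatically). -/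
noncomputable def dWeps {X Y : Type*} [Fintype X] [Fintype Y] (ε : ℝ)
    (α : X → ℝ) (β : Y → ℝ) (C : X × Y → ℝ) : ℝ :=
  ⨅ μ : {μ : X × Y → ℝ // IsCoupling μ α β},
    (∑ z : X × Y, C z * μ.1 z + ε * ∑ z : X × Y, μ.1 z * Real.log (μ.1 z))

/-- The recursively defined cost matrices `C^{ε,δ,(l)}`. -/
noncomputable def CmatEps {X Y : Type*} [Fintype X] [Fintype Y]
    (MX : MarkovChain X) (MY : MarkovChain Y) (C : X × Y → ℝ) (ε δ : ℝ) :
    ℕ → X × Y → ℝ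
  | 0 => C
  | l + 1 => fun z =>
      δ * C z + (1 - δ) * dWeps ε (MX.kernel z.1) (MY.kernel z.2) (CmatEps MX MY C ε δ l)

/-- The depth-`k` entropy-regularized δ-discounted WL distance `d_WL^{δ,ε,(k)}`. -/
noncomputable def dWLke {X Y : Type*} [Fintype X] [Fintype Y]
    (MX : MarkovChain X) (MY : MarkovChain Y) (C : X × Y → ℝ) (ε δ : ℝ) (k : ℕ) : ℝ :=
  dWeps ε MX.init MY.init (CmatEps MX MY C ε δ k)

section aux12
variable {X Y : Type*} [Fintype X] [Fintype Y]

lemma prod_coupling12 {α : X → ℝ} {β : Y → ℝ} (hα : IsProb α) (hβ : IsProb β) :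
    IsCoupling (fun z : X × Y => α z.1 * β z.2) α β := by
  refine ⟨fun z => mul_nonneg (hα.1 _) (hβ.1 _), fun x => ?_, fun y => ?_⟩
  · simp [← Finset.mul_sum, hβ.2]
  · simp [← Finset.sum_mul, hα.2]

lemma coupling_sum_one12 {α : X → ℝ} {β : Y → ℝ} {μ : X × Y → ℝ}
    (hα : IsProb α) (h : IsCoupling μ α β) : ∑ z : X × Y, μ z = 1 := by
  rw [Fintype.sum_prod_type]
  simp only [h.2.1]
  exact hα.2

lemma coupling_le_one12 {α : X → ℝ} {β : Y → ℝ} {μ : X × Y → ℝ}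
    (hα : IsProb α) (h : IsCoupling μ α β) (z : X × Y) : μ z ≤ 1 := by
  have h1 := coupling_sum_one12 hα h
  calc μ z ≤ ∑ w : X × Y, μ w :=
        Finset.single_le_sum (fun w _ => h.1 w) (Finset.mem_univ z)
    _ = 1 := h1

lemma mul_log_ge_neg_one12 {x : ℝ} (hx : 0 ≤ x) : -1 ≤ x * Real.log x := by
  rcases eq_or_lt_of_le hx with h | h
  · simp [← h]
  · have h1 := Real.log_le_sub_one_of_pos (show (0:ℝ) < x⁻¹ by positivity)
    rw [Real.log_inv] at h1
    have h2 : x * x⁻¹ = 1 := mul_inv_cancel₀ (ne_of_gt h)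
    nlinarith [mul_le_mul_of_nonneg_left h1 hx]

lemma mul_log_nonpos12 {x : ℝ} (hx0 : 0 ≤ x) (hx1 : x ≤ 1) : x * Real.log x ≤ 0 :=
  mul_nonpos_of_nonneg_of_nonpos hx0 (Real.log_nonpos hx0 hx1)

lemma entropy_ge12 {μ : X × Y → ℝ} (hμ : ∀ z, 0 ≤ μ z) :
    -(Fintype.card (X × Y) : ℝ) ≤ ∑ z : X × Y, μ z * Real.log (μ z) := by
  calc -(Fintype.card (X × Y) : ℝ) = ∑ _z : X × Y, (-1 : ℝ) := by
        simp [Finset.sum_const, Finset.card_univ]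
    _ ≤ ∑ z : X × Y, μ z * Real.log (μ z) :=
        Finset.sum_le_sum fun z _ => mul_log_ge_neg_one12 (hμ z)

lemma entropy_le12 {α : X → ℝ} {β : Y → ℝ} {μ : X × Y → ℝ}
    (hα : IsProb α) (h : IsCoupling μ α β) :
    ∑ z : X × Y, μ z * Real.log (μ z) ≤ 0 :=
  Finset.sum_nonpos fun z _ => mul_log_nonpos12 (h.1 z) (coupling_le_one12 hα h z)

lemma dWeps_bdd12 {α : X → ℝ} {β : Y → ℝ} (hα : IsProb α) {ε : ℝ} (hε : 0 ≤ ε) (D : X × Y → ℝ) :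
    BddBelow (Set.range fun μ : {μ : X × Y → ℝ // IsCoupling μ α β} =>
      ∑ z : X × Y, D z * μ.1 z + ε * ∑ z : X × Y, μ.1 z * Real.log (μ.1 z)) := by
  refine ⟨-(∑ z : X × Y, |D z|) - ε * (Fintype.card (X × Y) : ℝ), ?_⟩
  rintro x ⟨μ, rfl⟩
  have h1 : ∀ z ∈ Finset.univ, -|D z| ≤ D z * μ.1 z := by
    intro z _
    nlinarith [neg_abs_le (D z), μ.2.1 z, abs_nonneg (D z), coupling_le_one12 hα μ.2 z]
  have h1' := Finset.sum_le_sum h1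
  rw [Finset.sum_neg_distrib] at h1'
  have h2 := entropy_ge12 (X := X) (Y := Y) μ.2.1
  have h3 := mul_le_mul_of_nonneg_left h2 hε
  simp only
  linarith

lemma dWeps_le_add12 {α : X → ℝ} {β : Y → ℝ} (hα : IsProb α) (hβ : IsProb β)
    {ε ε' b : ℝ} (hε : 0 ≤ ε) {D D' : X × Y → ℝ}
    (h : ∀ μ : X × Y → ℝ, IsCoupling μ α β →
      ∑ z : X × Y, D z * μ z + ε * ∑ z : X × Y, μ z * Real.log (μ z) ≤
      ∑ z : X × Y, D' z * μ z + ε' * ∑ z : X × Y, μ z * Real.log (μ z) + b) :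
    dWeps ε α β D ≤ dWeps ε' α β D' + b := by
  haveI : Nonempty {μ : X × Y → ℝ // IsCoupling μ α β} :=
    ⟨⟨_, prod_coupling12 hα hβ⟩⟩
  have key : ∀ μ : {μ : X × Y → ℝ // IsCoupling μ α β},
      dWeps ε α β D ≤
        (∑ z : X × Y, D' z * μ.1 z + ε' * ∑ z : X × Y, μ.1 z * Real.log (μ.1 z)) + b := by
    intro μ
    have h0 : dWeps ε α β D ≤
        ∑ z : X × Y, D z * μ.1 z + ε * ∑ z : X × Y, μ.1 z * Real.log (μ.1 z) :=
      ciInf_le (dWeps_bdd12 hα hε D) μ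
    exact h0.trans (h μ.1 μ.2)
  have h4 : dWeps ε α β D - b ≤ dWeps ε' α β D' :=
    le_ciInf fun μ => by linarith [key μ]
  linarith

lemma dWeps_lipschitz12 {α : X → ℝ} {β : Y → ℝ} (hα : IsProb α) (hβ : IsProb β)
    {ε b : ℝ} (hε : 0 ≤ ε) {D D' : X × Y → ℝ} (hb : ∀ z, |D z - D' z| ≤ b) :
    |dWeps ε α β D - dWeps ε α β D'| ≤ b := by
  have main : ∀ E E' : X × Y → ℝ, (∀ z, |E z - E' z| ≤ b) →
      dWeps ε α β E ≤ dWeps ε α β E' + b := by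
    intro E E' hEb
    refine dWeps_le_add12 hα hβ hε (fun μ hμ => ?_)
    have hs : ∑ z : X × Y, E z * μ z ≤ ∑ z : X × Y, (E' z * μ z + b * μ z) := by
      refine Finset.sum_le_sum fun z _ => ?_
      have h1 : E z - E' z ≤ b := (abs_le.mp (hEb z)).2
      nlinarith [hμ.1 z]
    rw [Finset.sum_add_distrib, ← Finset.mul_sum, coupling_sum_one12 hα hμ, mul_one] at hs
    linarith
  have h1 := main D D' hb
  have h2 := main D' D (fun z => by rw [abs_sub_comm]; exact hb z)
  rw [abs_le]; constructor <;> linarith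

lemma dWeps_eps_le12 {α : X → ℝ} {β : Y → ℝ} (hα : IsProb α) (hβ : IsProb β)
    {ε : ℝ} (hε : 0 ≤ ε) (D : X × Y → ℝ) :
    dWeps ε α β D ≤ dWeps 0 α β D := by
  have := dWeps_le_add12 hα hβ (ε' := 0) (b := 0) (D := D) (D' := D) hε
    (fun μ hμ => by
      have hE := entropy_le12 hα hμ
      nlinarith)
  linarith

lemma dWeps_zero_le12 {α : X → ℝ} {β : Y → ℝ} (hα : IsProb α) (hβ : IsProb β)
    {ε : ℝ} (hε : 0 ≤ ε) (D : X × Y → ℝ) :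
    dWeps 0 α β D ≤ dWeps ε α β D + ε * (Fintype.card (X × Y) : ℝ) := by
  refine dWeps_le_add12 hα hβ (ε := 0) le_rfl (fun μ hμ => ?_)
  have hE := entropy_ge12 (X := X) (Y := Y) hμ.1
  nlinarith

lemma dWeps_abs_le12 {α : X → ℝ} {β : Y → ℝ} (hα : IsProb α) (hβ : IsProb β)
    {ε : ℝ} (hε : 0 ≤ ε) (D : X × Y → ℝ) :
    |dWeps ε α β D| ≤ (∑ z : X × Y, |D z|) + ε * (Fintype.card (X × Y) : ℝ) := by
  haveI : Nonempty {μ : X × Y → ℝ // IsCoupling μ α β} :=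
    ⟨⟨_, prod_coupling12 hα hβ⟩⟩
  have hub : dWeps ε α β D ≤ ∑ z : X × Y, |D z| := by
    set μ0 : {μ : X × Y → ℝ // IsCoupling μ α β} := ⟨_, prod_coupling12 hα hβ⟩
    have h0 : dWeps ε α β D ≤
        ∑ z : X × Y, D z * μ0.1 z + ε * ∑ z : X × Y, μ0.1 z * Real.log (μ0.1 z) :=
      ciInf_le (dWeps_bdd12 hα hε D) μ0
    have h1 : ∑ z : X × Y, D z * μ0.1 z ≤ ∑ z : X × Y, |D z| := by
      refine Finset.sum_le_sum fun z _ => ?_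
      nlinarith [le_abs_self (D z), abs_nonneg (D z), μ0.2.1 z,
        coupling_le_one12 hα μ0.2 z]
    have h2 := entropy_le12 hα μ0.2
    nlinarith
  have hlb : -((∑ z : X × Y, |D z|) + ε * (Fintype.card (X × Y) : ℝ)) ≤ dWeps ε α β D := by
    refine le_ciInf fun μ => ?_
    have h1 : ∀ z ∈ Finset.univ, -|D z| ≤ D z * μ.1 z := by
      intro z _
      nlinarith [neg_abs_le (D z), μ.2.1 z, abs_nonneg (D z), coupling_le_one12 hα μ.2 z]
    have h1' := Finset.sum_le_sum h1
    rw [Finset.sum_neg_distrib] at h1'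
    have h2 := entropy_ge12 (X := X) (Y := Y) μ.2.1
    have h3 := mul_le_mul_of_nonneg_left h2 hε
    linarith
  have h4 : 0 ≤ ε * (Fintype.card (X × Y) : ℝ) := mul_nonneg hε (Nat.cast_nonneg _)
  rw [abs_le]; constructor <;> linarith

end aux12

section aux12b
variable {X Y : Type*} [Fintype X] [Fintype Y]

lemma Cmat_diff12 (MX : MarkovChain X) (MY : MarkovChain Y) (C : X × Y → ℝ)
    {δ ε : ℝ} (hδ0 : 0 < δ) (hδ1 : δ ≤ 1) (hε : 0 ≤ ε) :
    ∀ l : ℕ, ∀ z : X × Y,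
      |CmatEps MX MY C ε δ l z - CmatEps MX MY C 0 δ l z| ≤
        ε * (Fintype.card (X × Y) : ℝ) * l := by
  intro l
  induction l with
  | zero => intro z; simp [CmatEps]
  | succ l ih =>
    intro z
    have hn : (0:ℝ) ≤ (Fintype.card (X × Y) : ℝ) := Nat.cast_nonneg _
    have hα := MX.kernel_prob z.1
    have hβ := MY.kernel_prob z.2
    set Aε := dWeps ε (MX.kernel z.1) (MY.kernel z.2) (CmatEps MX MY C ε δ l) with hAε
    set A0 := dWeps 0 (MX.kernel z.1) (MY.kernel z.2) (CmatEps MX MY C ε δ l) with hA0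
    set B0 := dWeps 0 (MX.kernel z.1) (MY.kernel z.2) (CmatEps MX MY C 0 δ l) with hB0
    have h1 : |Aε - A0| ≤ ε * (Fintype.card (X × Y) : ℝ) := by
      have a := dWeps_eps_le12 hα hβ hε (CmatEps MX MY C ε δ l)
      have b := dWeps_zero_le12 hα hβ hε (CmatEps MX MY C ε δ l)
      rw [abs_le]; constructor <;> [linarith; linarith]
    have h2 : |A0 - B0| ≤ ε * (Fintype.card (X × Y) : ℝ) * l :=
      dWeps_lipschitz12 hα hβ le_rfl (fun w => ih w)
    have habs : |Aε - B0| ≤ |Aε - A0| + |A0 - B0| := abs_sub_le Aε A0 B0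
    show |(δ * C z + (1 - δ) * Aε) - (δ * C z + (1 - δ) * B0)| ≤
      ε * (Fintype.card (X × Y) : ℝ) * (l + 1 : ℕ)
    have heq : (δ * C z + (1 - δ) * Aε) - (δ * C z + (1 - δ) * B0)
        = (1 - δ) * (Aε - B0) := by ring
    rw [heq, abs_mul, abs_of_nonneg (by linarith : (0:ℝ) ≤ 1 - δ)]
    push_cast
    nlinarith [abs_nonneg (Aε - B0), mul_nonneg (mul_nonneg hε hn) (Nat.cast_nonneg (α := ℝ) l)]

lemma Cmat_step12 (MX : MarkovChain X) (MY : MarkovChain Y) (C : X × Y → ℝ)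
    {δ ε : ℝ} (hδ0 : 0 < δ) (hδ1 : δ ≤ 1) (hε : 0 ≤ ε) :
    ∀ l : ℕ, ∀ z : X × Y,
      |CmatEps MX MY C ε δ (l + 1) z - CmatEps MX MY C ε δ l z| ≤
        (1 - δ) ^ l * (2 * (∑ w : X × Y, |C w|) + ε * (Fintype.card (X × Y) : ℝ)) := by
  intro l
  induction l with
  | zero =>
    intro z
    have hα := MX.kernel_prob z.1
    have hβ := MY.kernel_prob z.2
    set A := dWeps ε (MX.kernel z.1) (MY.kernel z.2) (CmatEps MX MY C ε δ 0) with hA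
    have hAb : |A| ≤ (∑ w : X × Y, |C w|) + ε * (Fintype.card (X × Y) : ℝ) := by
      rw [hA]
      show |dWeps ε (MX.kernel z.1) (MY.kernel z.2) C| ≤ _
      exact dWeps_abs_le12 hα hβ hε C
    have hCz : |C z| ≤ ∑ w : X × Y, |C w| :=
      Finset.single_le_sum (fun w _ => abs_nonneg (C w)) (Finset.mem_univ z)
    show |(δ * C z + (1 - δ) * A) - C z| ≤
      (1 - δ) ^ 0 * (2 * (∑ w : X × Y, |C w|) + ε * (Fintype.card (X × Y) : ℝ))
    have heq : (δ * C z + (1 - δ) * A) - C z = (1 - δ) * (A - C z) := by ring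
    rw [heq, abs_mul, abs_of_nonneg (by linarith : (0:ℝ) ≤ 1 - δ), pow_zero, one_mul]
    have htri : |A - C z| ≤ |A| + |C z| := abs_sub A (C z)
    nlinarith [abs_nonneg (A - C z)]
  | succ l ih =>
    intro z
    have hα := MX.kernel_prob z.1
    have hβ := MY.kernel_prob z.2
    have h2 : |dWeps ε (MX.kernel z.1) (MY.kernel z.2) (CmatEps MX MY C ε δ (l + 1))
        - dWeps ε (MX.kernel z.1) (MY.kernel z.2) (CmatEps MX MY C ε δ l)| ≤
        (1 - δ) ^ l * (2 * (∑ w : X × Y, |C w|) + ε * (Fintype.card (X × Y) : ℝ)) :=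
      dWeps_lipschitz12 hα hβ hε (fun w => ih w)
    show |(δ * C z + (1 - δ) * dWeps ε (MX.kernel z.1) (MY.kernel z.2) (CmatEps MX MY C ε δ (l+1)))
        - (δ * C z + (1 - δ) * dWeps ε (MX.kernel z.1) (MY.kernel z.2) (CmatEps MX MY C ε δ l))| ≤ _
    have heq : (δ * C z + (1 - δ) * dWeps ε (MX.kernel z.1) (MY.kernel z.2) (CmatEps MX MY C ε δ (l+1)))
        - (δ * C z + (1 - δ) * dWeps ε (MX.kernel z.1) (MY.kernel z.2) (CmatEps MX MY C ε δ l))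
        = (1 - δ) * (dWeps ε (MX.kernel z.1) (MY.kernel z.2) (CmatEps MX MY C ε δ (l+1))
          - dWeps ε (MX.kernel z.1) (MY.kernel z.2) (CmatEps MX MY C ε δ l)) := by ring
    rw [heq, abs_mul, abs_of_nonneg (by linarith : (0:ℝ) ≤ 1 - δ), pow_succ]
    refine le_trans (mul_le_mul_of_nonneg_left h2 (by linarith : (0:ℝ) ≤ 1 - δ)) (le_of_eq (by ring))

end aux12b


/-- Convergence of the entropy-regularized discounted WL distance: for each
finite depth `k`, `d_WL^{δ,ε,(k)} → d_WL^{δ,(k)}` as `ε → 0⁺`; moreover the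
depth-`∞` limits `d_WL^{δ,ε,(∞)} = lim_k d_WL^{δ,ε,(k)}` exist (for all `ε ≥ 0`,
including `ε = 0`) and `d_WL^{δ,ε,(∞)} → d_WL^{δ,(∞)}` as `ε → 0⁺`. -/
theorem stmt12 {X Y : Type*} [Fintype X] [Fintype Y]
    (MX : MarkovChain X) (MY : MarkovChain Y)
    (C : X × Y → ℝ) (hC : ∀ z, 0 ≤ C z)
    (δ : ℝ) (hδ0 : 0 < δ) (hδ1 : δ ≤ 1) :
    (∀ k : ℕ,
      Tendsto (fun ε => dWLke MX MY C ε δ k) (𝓝[>] (0 : ℝ))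
        (𝓝 (dWLke MX MY C 0 δ k))) ∧
    ∃ L : ℝ → ℝ,
      (∀ ε : ℝ, 0 ≤ ε →
        Tendsto (fun k => dWLke MX MY C ε δ k) atTop (𝓝 (L ε))) ∧
      Tendsto L (𝓝[>] (0 : ℝ)) (𝓝 (L 0)) := by
  have hXY : Nonempty {μ : X × Y → ℝ // IsCoupling μ MX.init MY.init} :=
    ⟨⟨_, prod_coupling12 MX.init_prob MY.init_prob⟩⟩
  set n : ℝ := (Fintype.card (X × Y) : ℝ) with hn
  have hn0 : (0:ℝ) ≤ n := Nat.cast_nonneg _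
  set S : ℝ := ∑ w : X × Y, |C w| with hS
  have hS0 : (0:ℝ) ≤ S := Finset.sum_nonneg fun _ _ => abs_nonneg _
  have hIX := MX.init_prob
  have hIY := MY.init_prob
  have key1 : ∀ ε : ℝ, 0 ≤ ε → ∀ k : ℕ,
      |dWLke MX MY C ε δ k - dWLke MX MY C 0 δ k| ≤ ε * n * (k + 1) := by
    intro ε hε k
    have h1 : |dWeps ε MX.init MY.init (CmatEps MX MY C ε δ k)
        - dWeps 0 MX.init MY.init (CmatEps MX MY C ε δ k)| ≤ ε * n := by
      have a := dWeps_eps_le12 hIX hIY hε (CmatEps MX MY C ε δ k)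
      have b := dWeps_zero_le12 hIX hIY hε (CmatEps MX MY C ε δ k)
      rw [abs_le]; constructor <;> [linarith; linarith]
    have h2 : |dWeps 0 MX.init MY.init (CmatEps MX MY C ε δ k)
        - dWeps 0 MX.init MY.init (CmatEps MX MY C 0 δ k)| ≤ ε * n * k :=
      dWeps_lipschitz12 hIX hIY le_rfl (fun w => Cmat_diff12 MX MY C hδ0 hδ1 hε k w)
    have htri := abs_sub_le (dWeps ε MX.init MY.init (CmatEps MX MY C ε δ k))
      (dWeps 0 MX.init MY.init (CmatEps MX MY C ε δ k))
      (dWeps 0 MX.init MY.init (CmatEps MX MY C 0 δ k))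
    show |dWeps ε MX.init MY.init (CmatEps MX MY C ε δ k)
      - dWeps 0 MX.init MY.init (CmatEps MX MY C 0 δ k)| ≤ ε * n * (k + 1)
    nlinarith
  have part1 : ∀ k : ℕ, Tendsto (fun ε => dWLke MX MY C ε δ k) (𝓝[>] (0:ℝ))
      (𝓝 (dWLke MX MY C 0 δ k)) := by
    intro k
    rw [Metric.tendsto_nhdsWithin_nhds]
    intro η hη
    refine ⟨η / (n * (k + 1) + 1), by positivity, ?_⟩
    intro ε hε hd
    have hε0 : (0:ℝ) < ε := Set.mem_Ioi.mp hε
    rw [Real.dist_eq, sub_zero, abs_of_pos hε0] at hd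
    rw [Real.dist_eq]
    have hk := key1 ε hε0.le k
    have hlt : ε * (n * (k + 1) + 1) < η := by
      have hpos : (0:ℝ) < n * (k + 1) + 1 := by positivity
      exact (lt_div_iff₀ hpos).mp hd
    have heq : ε * n * ((k:ℝ) + 1) = ε * (n * ((k:ℝ) + 1) + 1) - ε := by ring
    calc |dWLke MX MY C ε δ k - dWLke MX MY C 0 δ k| ≤ ε * n * (k + 1) := hk
      _ < η := by rw [heq]; linarith
  have hr0 : (0:ℝ) ≤ 1 - δ := by linarith
  have hr1 : (1:ℝ) - δ < 1 := by linarith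
  have step : ∀ ε : ℝ, 0 ≤ ε → ∀ k : ℕ,
      dist (dWLke MX MY C ε δ k) (dWLke MX MY C ε δ (k + 1)) ≤
        (2 * S + ε * n) * (1 - δ) ^ k := by
    intro ε hε k
    rw [Real.dist_eq]
    have h := dWeps_lipschitz12 hIX hIY hε
      (D := CmatEps MX MY C ε δ k) (D' := CmatEps MX MY C ε δ (k + 1))
      (fun w => by
        have h0 := Cmat_step12 MX MY C hδ0 hδ1 hε k w
        rw [abs_sub_comm] at h0
        exact h0)
    calc |dWLke MX MY C ε δ k - dWLke MX MY C ε δ (k + 1)| ≤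
          (1 - δ) ^ k * (2 * S + ε * n) := h
      _ = (2 * S + ε * n) * (1 - δ) ^ k := by ring
  have cauchy : ∀ ε : ℝ, 0 ≤ ε → CauchySeq (fun k => dWLke MX MY C ε δ k) :=
    fun ε hε => cauchySeq_of_le_geometric (1 - δ) (2 * S + ε * n) hr1 (step ε hε)
  have tendstoL : ∀ ε : ℝ, 0 ≤ ε →
      Tendsto (fun k => dWLke MX MY C ε δ k) atTop
        (𝓝 (limUnder atTop (fun k => dWLke MX MY C ε δ k))) :=
    fun ε hε => (cauchy ε hε).tendsto_limUnder
  have tail : ∀ ε : ℝ, 0 ≤ ε → ∀ k : ℕ,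
      dist (dWLke MX MY C ε δ k) (limUnder atTop (fun j => dWLke MX MY C ε δ j)) ≤
        (2 * S + ε * n) * (1 - δ) ^ k / (1 - (1 - δ)) :=
    fun ε hε => dist_le_of_le_geometric_of_tendsto (1 - δ) (2 * S + ε * n) hr1
      (step ε hε) (tendstoL ε hε)
  refine ⟨part1, fun ε => limUnder atTop (fun k => dWLke MX MY C ε δ k),
    fun ε hε => tendstoL ε hε, ?_⟩
  rw [Metric.tendsto_nhdsWithin_nhds]
  intro η hη
  obtain ⟨k, hk⟩ : ∃ k : ℕ,
      (2 * S + n) * (1 - δ) ^ k / δ + 2 * S * (1 - δ) ^ k / δ < η / 2 := by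
    have hpow := tendsto_pow_atTop_nhds_zero_of_lt_one hr0 hr1
    have hlim : Tendsto (fun k : ℕ =>
        (2 * S + n) * (1 - δ) ^ k / δ + 2 * S * (1 - δ) ^ k / δ) atTop (𝓝 0) := by
      have h1 := (hpow.const_mul (2 * S + n)).div_const δ
      have h2 := (hpow.const_mul (2 * S)).div_const δ
      have h3 := h1.add h2
      simpa using h3
    exact (hlim.eventually (gt_mem_nhds (by linarith : (0:ℝ) < η / 2))).exists
  refine ⟨min 1 (η / (2 * (n * (k + 1) + 1))), by positivity, ?_⟩
  intro ε hε hd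
  have hε0 : (0:ℝ) < ε := Set.mem_Ioi.mp hε
  rw [Real.dist_eq, sub_zero, abs_of_pos hε0] at hd
  have hε1 : ε ≤ 1 := le_of_lt (lt_of_lt_of_le hd (min_le_left _ _))
  have hεη : ε < η / (2 * (n * (k + 1) + 1)) := lt_of_lt_of_le hd (min_le_right _ _)
  have hδδ : (1:ℝ) - (1 - δ) = δ := by ring
  have t1 := tail ε hε0.le k
  have t2 := tail 0 le_rfl k
  rw [hδδ] at t1 t2
  have t3 := key1 ε hε0.le k
  have hpk : (0:ℝ) ≤ (1 - δ) ^ k := pow_nonneg hr0 k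
  have hmono : (2 * S + ε * n) * (1 - δ) ^ k / δ ≤ (2 * S + n) * (1 - δ) ^ k / δ := by
    gcongr
    nlinarith
  have ht2' : dist (dWLke MX MY C 0 δ k)
      (limUnder atTop (fun j => dWLke MX MY C 0 δ j)) ≤ 2 * S * (1 - δ) ^ k / δ := by
    refine t2.trans ?_
    gcongr
    nlinarith
  have htri : dist (limUnder atTop (fun j => dWLke MX MY C ε δ j))
        (limUnder atTop (fun j => dWLke MX MY C 0 δ j)) ≤
      dist (dWLke MX MY C ε δ k) (limUnder atTop (fun j => dWLke MX MY C ε δ j)) +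
      dist (dWLke MX MY C ε δ k) (dWLke MX MY C 0 δ k) +
      dist (dWLke MX MY C 0 δ k) (limUnder atTop (fun j => dWLke MX MY C 0 δ j)) := by
    rw [dist_comm (dWLke MX MY C ε δ k) (limUnder atTop (fun j => dWLke MX MY C ε δ j))]
    exact dist_triangle4 _ _ _ _
  have hd2 : dist (dWLke MX MY C ε δ k) (dWLke MX MY C 0 δ k) ≤ ε * n * (k + 1) := by
    rw [Real.dist_eq]; exact t3
  have hη2 : ε * n * ((k:ℝ) + 1) < η / 2 := by
    have h := (lt_div_iff₀ (by positivity : (0:ℝ) < 2 * (n * ((k:ℝ) + 1) + 1))).mp hεη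
    nlinarith
  show dist (limUnder atTop (fun j => dWLke MX MY C ε δ j))
      (limUnder atTop (fun j => dWLke MX MY C 0 δ j)) < η
  linarith
end

section
/- Let (X, d_X) be a finite pseudometric space, p a probability distribution on ℕ, and take the cost C(x,x') = d_X(x,x'). Then d_OTM^p(·,·;d_X) is a pseudometric on the set of finite Markov chains with state space X: d_OTM^p(𝒳,𝒳;d_X) = 0 for every chain 𝒳, d_OTM^p(𝒳,𝒴;d_X) = d_OTM^p(𝒴,𝒳;d_X), and d_OTM^p(𝒳,𝒴;d_X) ≤ d_OTM^p(𝒳,𝒵;d_X) + d_OTM^p(𝒵,𝒴;d_X) for all chains 𝒳, 𝒴, 𝒵 on X. -/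
open scoped BigOperators
open Filter Topology

/-- `d` is a pseudometric on `X`. -/
def IsPseudometric {X : Type*} (d : X → X → ℝ) : Prop :=
  (∀ x y, 0 ≤ d x y) ∧ (∀ x, d x x = 0) ∧ (∀ x y, d x y = d y x) ∧
  (∀ x y z, d x z ≤ d x y + d y z)

section Basic
variable {X Y : Type*} [Fintype X] [Fintype Y] {MX : MarkovChain X} {MY : MarkovChain Y}

lemma sum_eq_zero_of_nonneg {ι : Type*} [Fintype ι] {f : ι → ℝ} (h0 : ∀ i, 0 ≤ f i)
    (hs : ∑ i, f i = 0) : ∀ i, f i = 0 := by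
  intro i
  exact (Finset.sum_eq_zero_iff_of_nonneg (fun j _ => h0 j)).1 hs i (Finset.mem_univ i)

lemma law_zero (π : MarkovCoupling MX MY) : π.law 0 = π.init := rfl

lemma law_succ (π : MarkovCoupling MX MY) (t : ℕ) (z : X × Y) :
    π.law (t + 1) z = ∑ w, π.trans t w z * π.law t w := rfl

lemma law_nonneg (π : MarkovCoupling MX MY) : ∀ t z, 0 ≤ π.law t z := by
  intro t
  induction t with
  | zero => exact π.init_coupling.1
  | succ t ih =>
    intro z
    rw [law_succ]
    exact Finset.sum_nonneg fun w _ => mul_nonneg ((π.trans_coupling t w).1 z) (ih w)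

lemma coupling_sum_one {μ : X × Y → ℝ} {α : X → ℝ} {β : Y → ℝ}
    (h : IsCoupling μ α β) (hα : IsProb α) : ∑ z, μ z = 1 := by
  rw [Fintype.sum_prod_type]
  simp only [h.2.1]
  exact hα.2

lemma law_sum_one (π : MarkovCoupling MX MY) : ∀ t, ∑ z, π.law t z = 1 := by
  intro t
  induction t with
  | zero => exact coupling_sum_one π.init_coupling MX.init_prob
  | succ t ih =>
    simp only [law_succ]
    rw [Finset.sum_comm]
    have : ∀ w : X × Y, ∑ z, π.trans t w z * π.law t w = π.law t w := by
      intro w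
      rw [← Finset.sum_mul, coupling_sum_one (π.trans_coupling t w) (MX.kernel_prob w.1), one_mul]
    simp only [this, ih]

lemma law_le_one (π : MarkovCoupling MX MY) (t : ℕ) (z : X × Y) : π.law t z ≤ 1 := by
  rw [← law_sum_one π t]
  exact Finset.single_le_sum (fun w _ => law_nonneg π t w) (Finset.mem_univ z)

/-- cost at time t -/
noncomputable def costAt (C : X × Y → ℝ) (π : MarkovCoupling MX MY) (t : ℕ) : ℝ :=
  ∑ z, C z * π.law t z

lemma costAt_nonneg {C : X × Y → ℝ} (hC : ∀ z, 0 ≤ C z) (π : MarkovCoupling MX MY) (t : ℕ) :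
    0 ≤ costAt C π t :=
  Finset.sum_nonneg fun z _ => mul_nonneg (hC z) (law_nonneg π t z)

lemma costAt_le {C : X × Y → ℝ} (hC : ∀ z, 0 ≤ C z) (π : MarkovCoupling MX MY) (t : ℕ) :
    costAt C π t ≤ ∑ z, C z :=
  Finset.sum_le_sum fun z _ => by
    calc C z * π.law t z ≤ C z * 1 := mul_le_mul_of_nonneg_left (law_le_one π t z) (hC z)
    _ = C z := mul_one _

lemma summable_cost {C : X × Y → ℝ} (hC : ∀ z, 0 ≤ C z) {p : ℕ → ℝ} (hp : IsProbNat p)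
    (π : MarkovCoupling MX MY) : Summable (fun t => p t * costAt C π t) := by
  apply Summable.of_nonneg_of_le (fun t => mul_nonneg (hp.1 t) (costAt_nonneg hC π t))
    (fun t => mul_le_mul_of_nonneg_left (costAt_le hC π t) (hp.1 t))
  exact hp.2.summable.mul_right _

/-- product coupling: nonemptiness -/
noncomputable instance instNonemptyMarkovCoupling : Nonempty (MarkovCoupling MX MY) := by
  have prodC : ∀ (α : X → ℝ) (β : Y → ℝ), IsProb α → IsProb β →
      IsCoupling (fun z : X × Y => α z.1 * β z.2) α β := by
    intro α β hα hβ
    refine ⟨fun z => mul_nonneg (hα.1 z.1) (hβ.1 z.2), fun x => ?_, fun y => ?_⟩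
    · simp only [← Finset.mul_sum, hβ.2, mul_one]
    · simp only [← Finset.sum_mul, hα.2, one_mul]
  exact ⟨{ init := fun z => MX.init z.1 * MY.init z.2,
           trans := fun _ w z => MX.kernel w.1 z.1 * MY.kernel w.2 z.2,
           init_coupling := prodC _ _ MX.init_prob MY.init_prob,
           trans_coupling := fun t w => prodC _ _ (MX.kernel_prob w.1) (MY.kernel_prob w.2) }⟩

lemma dOTM_bddBelow (p : ℕ → ℝ) (hp : IsProbNat p) (C : X × Y → ℝ) (hC : ∀ z, 0 ≤ C z) :
    BddBelow (Set.range fun π : MarkovCoupling MX MY =>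
      ∑' t, p t * ∑ z : X × Y, C z * π.law t z) := by
  refine ⟨0, ?_⟩
  rintro _ ⟨π, rfl⟩
  exact tsum_nonneg fun t => mul_nonneg (hp.1 t) (costAt_nonneg hC π t)

lemma dOTM_le (p : ℕ → ℝ) (hp : IsProbNat p) (C : X × Y → ℝ) (hC : ∀ z, 0 ≤ C z)
    (π : MarkovCoupling MX MY) :
    dOTM p MX MY C ≤ ∑' t, p t * costAt C π t :=
  ciInf_le (dOTM_bddBelow p hp C hC) π

end Basic
section Refl
open Classical
variable {X : Type*} [Fintype X]

/-- diagonal coupling -/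
noncomputable def diagCoupling (MX : MarkovChain X) : MarkovCoupling MX MX where
  init := fun z => if z.1 = z.2 then MX.init z.1 else 0
  trans := fun _ w z => if w.1 = w.2 then (if z.1 = z.2 then MX.kernel w.1 z.1 else 0)
    else MX.kernel w.1 z.1 * MX.kernel w.2 z.2
  init_coupling := by
    refine ⟨fun z => ?_, fun x => ?_, fun y => ?_⟩
    · dsimp only; split <;> simp [MX.init_prob.1]
    · simp
    · simp +contextual
  trans_coupling := by
    intro t w
    by_cases hw : w.1 = w.2
    · refine ⟨fun z => ?_, fun x => ?_, fun y => ?_⟩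
      · dsimp only; rw [if_pos hw]; split <;> simp [(MX.kernel_prob w.1).1]
      · simp [hw]
      · simp +contextual [hw]
    · refine ⟨fun z => ?_, fun x => ?_, fun y => ?_⟩
      · dsimp only
        rw [if_neg hw]
        exact mul_nonneg ((MX.kernel_prob w.1).1 _) ((MX.kernel_prob w.2).1 _)
      · simp only [if_neg hw, ← Finset.mul_sum, (MX.kernel_prob w.2).2, mul_one]
      · simp only [if_neg hw, ← Finset.sum_mul, (MX.kernel_prob w.1).2, one_mul]

lemma diag_law_off {MX : MarkovChain X} : ∀ t (z : X × X), z.1 ≠ z.2 →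
    (diagCoupling MX).law t z = 0 := by
  intro t
  induction t with
  | zero =>
    intro z hz
    show (if z.1 = z.2 then MX.init z.1 else 0) = 0
    rw [if_neg hz]
  | succ t ih =>
    intro z hz
    rw [law_succ]
    apply Finset.sum_eq_zero
    intro w _
    by_cases hw : w.1 = w.2
    · have : (diagCoupling MX).trans t w z = 0 := by
        show (if w.1 = w.2 then (if z.1 = z.2 then MX.kernel w.1 z.1 else 0)
          else MX.kernel w.1 z.1 * MX.kernel w.2 z.2) = 0
        rw [if_pos hw, if_neg hz]
      rw [this, zero_mul]
    · rw [ih w hw, mul_zero]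

lemma dOTM_self {MX : MarkovChain X} (dX : X → X → ℝ) (hdX : IsPseudometric dX)
    (p : ℕ → ℝ) (hp : IsProbNat p) :
    dOTM p MX MX (fun z : X × X => dX z.1 z.2) = 0 := by
  have hC : ∀ z : X × X, 0 ≤ dX z.1 z.2 := fun z => hdX.1 _ _
  apply le_antisymm
  · have h := dOTM_le p hp _ hC (diagCoupling MX)
    have hcost : ∀ t, costAt (fun z : X × X => dX z.1 z.2) (diagCoupling MX) t = 0 := by
      intro t
      apply Finset.sum_eq_zero
      intro z _
      by_cases hz : z.1 = z.2
      · show dX z.1 z.2 * _ = 0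
        rw [hz, hdX.2.1, zero_mul]
      · rw [diag_law_off t z hz, mul_zero]
    simpa [hcost] using h
  · apply le_ciInf
    intro π
    exact tsum_nonneg fun t => mul_nonneg (hp.1 t) (costAt_nonneg hC π t)

end Refl

section Symm
variable {X Y : Type*} [Fintype X] [Fintype Y] {MX : MarkovChain X} {MY : MarkovChain Y}

/-- swapped coupling -/
noncomputable def MarkovCoupling.swapC (π : MarkovCoupling MX MY) : MarkovCoupling MY MX where
  init := fun z => π.init z.swap
  trans := fun t w z => π.trans t w.swap z.swap
  init_coupling :=
    ⟨fun z => π.init_coupling.1 _, fun y => π.init_coupling.2.2 y, fun x => π.init_coupling.2.1 x⟩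
  trans_coupling := fun t w =>
    ⟨fun z => (π.trans_coupling t w.swap).1 _, fun y => (π.trans_coupling t w.swap).2.2 y,
     fun x => (π.trans_coupling t w.swap).2.1 x⟩

lemma swapC_law (π : MarkovCoupling MX MY) : ∀ t (z : Y × X),
    π.swapC.law t z = π.law t z.swap := by
  intro t
  induction t with
  | zero => intro z; rfl
  | succ t ih =>
    intro z
    rw [law_succ, law_succ]
    apply Fintype.sum_equiv (Equiv.prodComm Y X)
    intro w
    rw [ih w]
    rfl

lemma dOTM_symm_le (dX : X → X → ℝ) (hdX : IsPseudometric dX) (p : ℕ → ℝ) (hp : IsProbNat p)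
    (MX MY : MarkovChain X) :
    dOTM p MY MX (fun z : X × X => dX z.1 z.2) ≤ dOTM p MX MY (fun z : X × X => dX z.1 z.2) := by
  have hC : ∀ z : X × X, 0 ≤ dX z.1 z.2 := fun z => hdX.1 _ _
  apply le_ciInf
  intro π
  refine (dOTM_le p hp (fun z : X × X => dX z.1 z.2) hC π.swapC).trans (le_of_eq ?_)
  apply tsum_congr
  intro t
  congr 1
  show ∑ z : X × X, dX z.1 z.2 * π.swapC.law t z = ∑ z : X × X, dX z.1 z.2 * π.law t z
  calc ∑ z : X × X, dX z.1 z.2 * π.swapC.law t z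
      = ∑ z : X × X, dX z.2 z.1 * π.law t z := by
        apply Fintype.sum_equiv (Equiv.prodComm X X)
        intro z
        rw [swapC_law]
        rfl
    _ = ∑ z : X × X, dX z.1 z.2 * π.law t z := by
        exact Finset.sum_congr rfl fun z _ => by rw [hdX.2.2.1]

end Symm
section Glue
open Classical
variable {X : Type*} [Fintype X] {MX MZ MY : MarkovChain X}

lemma glue_sum {ι : Type*} [Fintype ι] (a κ : ℝ) (b : ι → ℝ) (hbsum : ∑ i, b i = κ)
    (ha0 : κ = 0 → a = 0) :
    ∑ i, (if κ = 0 then 0 else a * b i / κ) = a := by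
  by_cases h : κ = 0
  · simp [h, ha0 h]
  · simp only [if_neg h]
    rw [← Finset.sum_div, ← Finset.mul_sum, hbsum, mul_div_assoc, div_self h, mul_one]

lemma glue_sum' {ι : Type*} [Fintype ι] (b κ : ℝ) (a : ι → ℝ) (hasum : ∑ i, a i = κ)
    (hb0 : κ = 0 → b = 0) :
    ∑ i, (if κ = 0 then 0 else a i * b / κ) = b := by
  by_cases h : κ = 0
  · simp [h, hb0 h]
  · simp only [if_neg h]
    rw [← Finset.sum_div, ← Finset.sum_mul, hasum, mul_comm, mul_div_assoc, div_self h, mul_one]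

/-- the glued step kernel on triples -/
noncomputable def gK (π1 : MarkovCoupling MX MZ) (π2 : MarkovCoupling MZ MY)
    (t : ℕ) (w w' : X × X × X) : ℝ :=
  if MZ.kernel w.2.1 w'.2.1 = 0 then 0
  else π1.trans t (w.1, w.2.1) (w'.1, w'.2.1) * π2.trans t (w.2.1, w.2.2) (w'.2.1, w'.2.2)
    / MZ.kernel w.2.1 w'.2.1

/-- the glued law on triples -/
noncomputable def gLam (π1 : MarkovCoupling MX MZ) (π2 : MarkovCoupling MZ MY) :
    ℕ → X × X × X → ℝ
  | 0 => fun w => if MZ.init w.2.1 = 0 then 0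
      else π1.init (w.1, w.2.1) * π2.init (w.2.1, w.2.2) / MZ.init w.2.1
  | t + 1 => fun w' => ∑ w, gK π1 π2 t w w' * gLam π1 π2 t w

variable (π1 : MarkovCoupling MX MZ) (π2 : MarkovCoupling MZ MY)

lemma gK_nonneg (t : ℕ) (w w' : X × X × X) : 0 ≤ gK π1 π2 t w w' := by
  unfold gK
  split
  · exact le_refl 0
  · exact div_nonneg (mul_nonneg ((π1.trans_coupling t _).1 _) ((π2.trans_coupling t _).1 _))
      ((MZ.kernel_prob _).1 _)

lemma gLam_nonneg : ∀ t w, 0 ≤ gLam π1 π2 t w := by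
  intro t
  induction t with
  | zero =>
    intro w
    unfold gLam
    split
    · exact le_refl 0
    · exact div_nonneg (mul_nonneg (π1.init_coupling.1 _) (π2.init_coupling.1 _))
        (MZ.init_prob.1 _)
  | succ t ih =>
    intro w
    exact Finset.sum_nonneg fun v _ => mul_nonneg (gK_nonneg π1 π2 t v w) (ih v)

-- summing gK over the last coordinate
lemma gK_sum_y (t : ℕ) (x c y x' c' : X) :
    ∑ y', gK π1 π2 t (x, c, y) (x', c', y') = π1.trans t (x, c) (x', c') := by
  apply glue_sum (π1.trans t (x, c) (x', c')) (MZ.kernel c c')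
    (fun y' => π2.trans t (c, y) (c', y'))
  · exact (π2.trans_coupling t (c, y)).2.1 c'
  · intro h
    apply sum_eq_zero_of_nonneg (f := fun x' => π1.trans t (x, c) (x', c'))
      (fun x' => (π1.trans_coupling t (x, c)).1 _)
    rw [(π1.trans_coupling t (x, c)).2.2 c', h]

-- summing gK over the first coordinate
lemma gK_sum_x (t : ℕ) (x c y c' y' : X) :
    ∑ x', gK π1 π2 t (x, c, y) (x', c', y') = π2.trans t (c, y) (c', y') := by
  apply glue_sum' (π2.trans t (c, y) (c', y')) (MZ.kernel c c')
    (fun x' => π1.trans t (x, c) (x', c'))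
  · exact (π1.trans_coupling t (x, c)).2.2 c'
  · intro h
    apply sum_eq_zero_of_nonneg (f := fun y' => π2.trans t (c, y) (c', y'))
      (fun y' => (π2.trans_coupling t (c, y)).1 _)
    rw [(π2.trans_coupling t (c, y)).2.1 c', h]

lemma gLam_marg_y : ∀ t (x c : X), ∑ y, gLam π1 π2 t (x, c, y) = π1.law t (x, c) := by
  intro t
  induction t with
  | zero =>
    intro x c
    show ∑ y, (if MZ.init c = 0 then 0 else π1.init (x, c) * π2.init (c, y) / MZ.init c)
      = π1.init (x, c)
    apply glue_sum (π1.init (x, c)) (MZ.init c) (fun y => π2.init (c, y))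
    · exact π2.init_coupling.2.1 c
    · intro h
      apply sum_eq_zero_of_nonneg (f := fun x => π1.init (x, c)) (fun x => π1.init_coupling.1 _)
      rw [π1.init_coupling.2.2 c, h]
  | succ t ih =>
    intro x' c'
    show ∑ y', ∑ w, gK π1 π2 t w (x', c', y') * gLam π1 π2 t w = π1.law (t + 1) (x', c')
    rw [Finset.sum_comm, law_succ]
    calc ∑ w : X × X × X, ∑ y', gK π1 π2 t w (x', c', y') * gLam π1 π2 t w
        = ∑ w : X × X × X, π1.trans t (w.1, w.2.1) (x', c') * gLam π1 π2 t w := by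
          apply Finset.sum_congr rfl
          intro w _
          rw [← Finset.sum_mul, gK_sum_y]
      _ = ∑ x, ∑ c, π1.trans t (x, c) (x', c') * ∑ y, gLam π1 π2 t (x, c, y) := by
          rw [Fintype.sum_prod_type]
          apply Finset.sum_congr rfl
          intro x _
          rw [Fintype.sum_prod_type]
          apply Finset.sum_congr rfl
          intro c _
          rw [Finset.mul_sum]
      _ = ∑ w : X × X, π1.trans t w (x', c') * π1.law t w := by
          rw [Fintype.sum_prod_type]
          apply Finset.sum_congr rfl; intro x _
          apply Finset.sum_congr rfl; intro c _
          rw [ih]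

lemma gLam_marg_x : ∀ t (c y : X), ∑ x, gLam π1 π2 t (x, c, y) = π2.law t (c, y) := by
  intro t
  induction t with
  | zero =>
    intro c y
    show ∑ x, (if MZ.init c = 0 then 0 else π1.init (x, c) * π2.init (c, y) / MZ.init c)
      = π2.init (c, y)
    apply glue_sum' (π2.init (c, y)) (MZ.init c) (fun x => π1.init (x, c))
    · exact π1.init_coupling.2.2 c
    · intro h
      apply sum_eq_zero_of_nonneg (f := fun y => π2.init (c, y)) (fun y => π2.init_coupling.1 _)
      rw [π2.init_coupling.2.1 c, h]
  | succ t ih =>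
    intro c' y'
    show ∑ x', ∑ w, gK π1 π2 t w (x', c', y') * gLam π1 π2 t w = π2.law (t + 1) (c', y')
    rw [Finset.sum_comm, law_succ]
    calc ∑ w : X × X × X, ∑ x', gK π1 π2 t w (x', c', y') * gLam π1 π2 t w
        = ∑ w : X × X × X, π2.trans t (w.2.1, w.2.2) (c', y') * gLam π1 π2 t w := by
          apply Finset.sum_congr rfl
          intro w _
          rw [← Finset.sum_mul, gK_sum_x]
      _ = ∑ x, ∑ c, ∑ y, π2.trans t (c, y) (c', y') * gLam π1 π2 t (x, c, y) := by
          rw [Fintype.sum_prod_type]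
          apply Finset.sum_congr rfl
          intro x _
          rw [Fintype.sum_prod_type]
      _ = ∑ w : X × X, π2.trans t w (c', y') * π2.law t w := by
          rw [Finset.sum_comm, Fintype.sum_prod_type]
          apply Finset.sum_congr rfl; intro c _
          rw [Finset.sum_comm]
          apply Finset.sum_congr rfl; intro y _
          rw [← ih c y, Finset.mul_sum]

end Glue
section Glue2
open Classical
variable {X : Type*} [Fintype X] {MX MZ MY : MarkovChain X}
variable (π1 : MarkovCoupling MX MZ) (π2 : MarkovCoupling MZ MY)

/-- marginal of the glued law on the outer pair -/
noncomputable def gMu (t : ℕ) (z : X × X) : ℝ := ∑ c, gLam π1 π2 t (z.1, c, z.2)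

/-- one-step evolution numerator -/
noncomputable def gN (t : ℕ) (z z' : X × X) : ℝ :=
  ∑ c, ∑ c', gLam π1 π2 t (z.1, c, z.2) * gK π1 π2 t (z.1, c, z.2) (z'.1, c', z'.2)

lemma gMu_nonneg (t : ℕ) (z : X × X) : 0 ≤ gMu π1 π2 t z :=
  Finset.sum_nonneg fun c _ => gLam_nonneg π1 π2 t _

lemma gN_nonneg (t : ℕ) (z z' : X × X) : 0 ≤ gN π1 π2 t z z' :=
  Finset.sum_nonneg fun c _ => Finset.sum_nonneg fun c' _ =>
    mul_nonneg (gLam_nonneg π1 π2 t _) (gK_nonneg π1 π2 t _ _)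

lemma gN_eq_zero {t : ℕ} {z : X × X} (h : gMu π1 π2 t z = 0) (z' : X × X) :
    gN π1 π2 t z z' = 0 := by
  have hz : ∀ c, gLam π1 π2 t (z.1, c, z.2) = 0 :=
    sum_eq_zero_of_nonneg (fun c => gLam_nonneg π1 π2 t _) h
  apply Finset.sum_eq_zero
  intro c _
  apply Finset.sum_eq_zero
  intro c' _
  rw [hz c, zero_mul]

lemma gN_sum_y' (t : ℕ) (z : X × X) (x' : X) :
    ∑ y', gN π1 π2 t z (x', y') = gMu π1 π2 t z * MX.kernel z.1 x' := by
  unfold gN gMu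
  rw [Finset.sum_comm, Finset.sum_mul]
  apply Finset.sum_congr rfl
  intro c _
  rw [Finset.sum_comm]
  calc ∑ c', ∑ y', gLam π1 π2 t (z.1, c, z.2) * gK π1 π2 t (z.1, c, z.2) (x', c', y')
      = ∑ c', gLam π1 π2 t (z.1, c, z.2) * π1.trans t (z.1, c) (x', c') := by
        apply Finset.sum_congr rfl
        intro c' _
        rw [← Finset.mul_sum, gK_sum_y]
    _ = gLam π1 π2 t (z.1, c, z.2) * MX.kernel z.1 x' := by
        rw [← Finset.mul_sum, (π1.trans_coupling t (z.1, c)).2.1 x']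

lemma gN_sum_x' (t : ℕ) (z : X × X) (y' : X) :
    ∑ x', gN π1 π2 t z (x', y') = gMu π1 π2 t z * MY.kernel z.2 y' := by
  unfold gN gMu
  rw [Finset.sum_comm, Finset.sum_mul]
  apply Finset.sum_congr rfl
  intro c _
  rw [Finset.sum_comm]
  calc ∑ c', ∑ x', gLam π1 π2 t (z.1, c, z.2) * gK π1 π2 t (z.1, c, z.2) (x', c', y')
      = ∑ c', gLam π1 π2 t (z.1, c, z.2) * π2.trans t (c, z.2) (c', y') := by
        apply Finset.sum_congr rfl
        intro c' _
        rw [← Finset.mul_sum, gK_sum_x]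
    _ = gLam π1 π2 t (z.1, c, z.2) * MY.kernel z.2 y' := by
        rw [← Finset.mul_sum, (π2.trans_coupling t (c, z.2)).2.2 y']

/-- the glued Markovian coupling -/
noncomputable def glueCoupling : MarkovCoupling MX MY where
  init := gMu π1 π2 0
  trans := fun t z z' => if gMu π1 π2 t z = 0 then MX.kernel z.1 z'.1 * MY.kernel z.2 z'.2
    else gN π1 π2 t z z' / gMu π1 π2 t z
  init_coupling := by
    refine ⟨fun z => gMu_nonneg π1 π2 0 z, fun x => ?_, fun y => ?_⟩
    · show ∑ y, ∑ c, gLam π1 π2 0 (x, c, y) = MX.init x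
      rw [Finset.sum_comm]
      calc ∑ c, ∑ y, gLam π1 π2 0 (x, c, y) = ∑ c, π1.init (x, c) :=
          Finset.sum_congr rfl fun c _ => gLam_marg_y π1 π2 0 x c
        _ = MX.init x := π1.init_coupling.2.1 x
    · show ∑ x, ∑ c, gLam π1 π2 0 (x, c, y) = MY.init y
      rw [Finset.sum_comm]
      calc ∑ c, ∑ x, gLam π1 π2 0 (x, c, y) = ∑ c, π2.init (c, y) :=
          Finset.sum_congr rfl fun c _ => gLam_marg_x π1 π2 0 c y
        _ = MY.init y := π2.init_coupling.2.2 y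
  trans_coupling := by
    intro t z
    by_cases hz : gMu π1 π2 t z = 0
    · refine ⟨fun w => ?_, fun x' => ?_, fun y' => ?_⟩
      · dsimp only
        rw [if_pos hz]
        exact mul_nonneg ((MX.kernel_prob z.1).1 _) ((MY.kernel_prob z.2).1 _)
      · simp only [if_pos hz, ← Finset.mul_sum, (MY.kernel_prob z.2).2, mul_one]
      · simp only [if_pos hz, ← Finset.sum_mul, (MX.kernel_prob z.1).2, one_mul]
    · refine ⟨fun w => ?_, fun x' => ?_, fun y' => ?_⟩
      · dsimp only
        rw [if_neg hz]
        exact div_nonneg (gN_nonneg π1 π2 t z w) (gMu_nonneg π1 π2 t z)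
      · simp only [if_neg hz]
        rw [← Finset.sum_div, gN_sum_y' π1 π2 t z x', mul_comm,
          mul_div_assoc, div_self hz, mul_one]
      · simp only [if_neg hz]
        rw [← Finset.sum_div, gN_sum_x' π1 π2 t z y', mul_comm,
          mul_div_assoc, div_self hz, mul_one]

lemma glue_law : ∀ t z, (glueCoupling π1 π2).law t z = gMu π1 π2 t z := by
  intro t
  induction t with
  | zero => intro z; rfl
  | succ t ih =>
    intro z'
    rw [law_succ]
    have hterm : ∀ z : X × X, (glueCoupling π1 π2).trans t z z' * (glueCoupling π1 π2).law t z
        = gN π1 π2 t z z' := by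
      intro z
      rw [ih z]
      show (if gMu π1 π2 t z = 0 then MX.kernel z.1 z'.1 * MY.kernel z.2 z'.2
        else gN π1 π2 t z z' / gMu π1 π2 t z) * gMu π1 π2 t z = gN π1 π2 t z z'
      by_cases hz : gMu π1 π2 t z = 0
      · rw [if_pos hz, hz, mul_zero, gN_eq_zero π1 π2 hz]
      · rw [if_neg hz, div_mul_cancel₀ _ hz]
    simp only [hterm]
    -- ∑ z, gN t z z' = gMu (t+1) z'
    show ∑ z : X × X, gN π1 π2 t z z' = ∑ c', gLam π1 π2 (t + 1) (z'.1, c', z'.2)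
    have : ∀ c' : X, gLam π1 π2 (t + 1) (z'.1, c', z'.2)
        = ∑ x, ∑ c, ∑ y, gK π1 π2 t (x, c, y) (z'.1, c', z'.2) * gLam π1 π2 t (x, c, y) := by
      intro c'
      show ∑ w : X × X × X, _ = _
      rw [Fintype.sum_prod_type]
      apply Finset.sum_congr rfl
      intro x _
      rw [Fintype.sum_prod_type]
    simp only [this]
    rw [Fintype.sum_prod_type]
    unfold gN
    set G : X → X → X → X → ℝ := fun x y c c' =>
      gLam π1 π2 t (x, c, y) * gK π1 π2 t (x, c, y) (z'.1, c', z'.2) with hG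
    calc ∑ x, ∑ y, ∑ c, ∑ c', G x y c c'
        = ∑ x, ∑ y, ∑ c', ∑ c, G x y c c' :=
          Finset.sum_congr rfl fun x _ => Finset.sum_congr rfl fun y _ => Finset.sum_comm
      _ = ∑ x, ∑ c', ∑ y, ∑ c, G x y c c' :=
          Finset.sum_congr rfl fun x _ => Finset.sum_comm
      _ = ∑ c', ∑ x, ∑ y, ∑ c, G x y c c' := Finset.sum_comm
      _ = ∑ c', ∑ x, ∑ c, ∑ y, G x y c c' :=
          Finset.sum_congr rfl fun c' _ => Finset.sum_congr rfl fun x _ => Finset.sum_comm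
      _ = ∑ c', ∑ x, ∑ c, ∑ y,
            gK π1 π2 t (x, c, y) (z'.1, c', z'.2) * gLam π1 π2 t (x, c, y) := by
          simp only [hG, mul_comm]
lemma glue_cost (dX : X → X → ℝ) (hdX : IsPseudometric dX) (t : ℕ) :
    costAt (fun z : X × X => dX z.1 z.2) (glueCoupling π1 π2) t ≤
      costAt (fun z : X × X => dX z.1 z.2) π1 t +
        costAt (fun z : X × X => dX z.1 z.2) π2 t := by
  unfold costAt
  simp only [glue_law π1 π2 t]
  calc ∑ z : X × X, dX z.1 z.2 * gMu π1 π2 t z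
      = ∑ x, ∑ y, ∑ c, dX x y * gLam π1 π2 t (x, c, y) := by
        rw [Fintype.sum_prod_type]
        exact Finset.sum_congr rfl fun x _ => Finset.sum_congr rfl fun y _ => Finset.mul_sum ..
    _ ≤ ∑ x, ∑ y, ∑ c, (dX x c + dX c y) * gLam π1 π2 t (x, c, y) := by
        refine Finset.sum_le_sum fun x _ => Finset.sum_le_sum fun y _ =>
          Finset.sum_le_sum fun c _ => ?_
        exact mul_le_mul_of_nonneg_right (hdX.2.2.2 x c y) (gLam_nonneg π1 π2 t _)
    _ = (∑ x, ∑ y, ∑ c, dX x c * gLam π1 π2 t (x, c, y))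
        + ∑ x, ∑ y, ∑ c, dX c y * gLam π1 π2 t (x, c, y) := by
        simp only [add_mul, Finset.sum_add_distrib]
    _ = (∑ z : X × X, dX z.1 z.2 * π1.law t z) + ∑ z : X × X, dX z.1 z.2 * π2.law t z := by
        congr 1
        · calc ∑ x, ∑ y, ∑ c, dX x c * gLam π1 π2 t (x, c, y)
              = ∑ x, ∑ c, dX x c * π1.law t (x, c) := by
                refine Finset.sum_congr rfl fun x _ => ?_
                rw [Finset.sum_comm]
                refine Finset.sum_congr rfl fun c _ => ?_
                rw [← Finset.mul_sum, gLam_marg_y]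
            _ = _ := by rw [Fintype.sum_prod_type]
        · calc ∑ x, ∑ y, ∑ c, dX c y * gLam π1 π2 t (x, c, y)
              = ∑ y, ∑ c, dX c y * π2.law t (c, y) := by
                rw [Finset.sum_comm]
                refine Finset.sum_congr rfl fun y _ => ?_
                rw [Finset.sum_comm]
                refine Finset.sum_congr rfl fun c _ => ?_
                rw [← Finset.mul_sum, gLam_marg_x]
            _ = _ := by rw [Fintype.sum_prod_type]; exact Finset.sum_comm
  
end Glue2

section Tri
variable {X : Type*} [Fintype X]

lemma dOTM_triangle (dX : X → X → ℝ) (hdX : IsPseudometric dX) (p : ℕ → ℝ) (hp : IsProbNat p)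
    (MX MY MZ : MarkovChain X) :
    dOTM p MX MY (fun z : X × X => dX z.1 z.2) ≤
      dOTM p MX MZ (fun z : X × X => dX z.1 z.2) +
        dOTM p MZ MY (fun z : X × X => dX z.1 z.2) := by
  have hC : ∀ z : X × X, 0 ≤ dX z.1 z.2 := fun z => hdX.1 _ _
  set C := fun z : X × X => dX z.1 z.2 with hCdef
  have key : ∀ (π1 : MarkovCoupling MX MZ) (π2 : MarkovCoupling MZ MY),
      dOTM p MX MY C ≤ (∑' t, p t * costAt C π1 t) + ∑' t, p t * costAt C π2 t := by
    intro π1 π2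
    refine (dOTM_le p hp C hC (glueCoupling π1 π2)).trans ?_
    rw [← Summable.tsum_add (summable_cost hC hp π1) (summable_cost hC hp π2)]
    refine Summable.tsum_le_tsum (fun t => ?_) (summable_cost hC hp (glueCoupling π1 π2)) ?_
    · rw [← mul_add]
      exact mul_le_mul_of_nonneg_left (glue_cost π1 π2 dX hdX t) (hp.1 t)
    · exact (summable_cost hC hp π1).add (summable_cost hC hp π2)
  have h2 : ∀ π1 : MarkovCoupling MX MZ,
      dOTM p MX MY C - (∑' t, p t * costAt C π1 t) ≤ dOTM p MZ MY C := by
    intro π1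
    apply le_ciInf
    intro π2
    have := key π1 π2
    unfold costAt at this ⊢
    linarith
  have h3 : dOTM p MX MY C - dOTM p MZ MY C ≤ dOTM p MX MZ C := by
    apply le_ciInf
    intro π1
    have := h2 π1
    unfold costAt at this
    linarith
  linarith

end Tri

/-- With a pseudometric cost, the OTM distance is a pseudometric on the set of
finite Markov chains with state space `X`. -/
theorem stmt13 {X : Type*} [Fintype X]
    (dX : X → X → ℝ) (hdX : IsPseudometric dX)
    (p : ℕ → ℝ) (hp : IsProbNat p) :
    (∀ MX : MarkovChain X, dOTM p MX MX (fun z : X × X => dX z.1 z.2) = 0) ∧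
    (∀ MX MY : MarkovChain X,
      dOTM p MX MY (fun z : X × X => dX z.1 z.2) =
        dOTM p MY MX (fun z : X × X => dX z.1 z.2)) ∧
    (∀ MX MY MZ : MarkovChain X,
      dOTM p MX MY (fun z : X × X => dX z.1 z.2) ≤
        dOTM p MX MZ (fun z : X × X => dX z.1 z.2) +
          dOTM p MZ MY (fun z : X × X => dX z.1 z.2)) := by
  exact ⟨fun MX => dOTM_self dX hdX p hp,
    fun MX MY => le_antisymm (dOTM_symm_le dX hdX p hp MY MX) (dOTM_symm_le dX hdX p hp MX MY),
    fun MX MY MZ => dOTM_triangle dX hdX p hp MX MY MZ⟩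
end

section
/- Let (X, d_X) be a finite pseudometric space, and let m^X and m^Y be two irreducible and aperiodic transition kernels on X, with cost C(x,x') = d_X(x,x'). Then for any initial distributions ν^X, ν^Y ∈ 𝒫(X), the limit lim_{k→∞} d_WL^{(k)}((X, m^X, ν^X), (X, m^Y, ν^Y); C) exists and is the same for all choices of ν^X and ν^Y; in particular it equals lim_{k→∞} d_WL^{(k)}((X, m^X, μ^X), (X, m^Y, μ^Y); C) where μ^X, μ^Y are the unique stationary distributions of m^X, m^Y. -/
/-!
The independent coupling of two irreducible aperiodic kernels satisfies a Doeblin minorization: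
after some `s` steps its law gives mass at least `lam > 0` to every pair of states, whatever the
initial law. So, given a Markovian coupling `π` of the chains started at `(p, q)`, the chains
started at `(p', q')` can be coupled so that after each block of `s` steps a fraction `lam` of the
remaining mass is glued onto the trajectory of `π`. At depth `K` all but `(1 - lam) ^ (K / s)` of
the mass follows `π`, so depth-`K` distances for different initial laws differ by at most
`(1 - lam) ^ (K / s) * ∑ C`. For the stationary initial laws, dropping the first step of a
coupling shows that the depth-`k` distances increase with `k`; being bounded they converge, and
then so do all the others, to the same limit.
-/

open scoped BigOperators
open Filter Topology

/-- The Dirac mass at `k` on `ℕ`. -/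
noncomputable def diracN (k : ℕ) : ℕ → ℝ := fun t => if t = k then 1 else 0

/-- The depth-`k` WL distance, `d_WL^{(k)} = d_OTM^{δ_k}`. -/
noncomputable def dWL {X Y : Type*} [Fintype X] [Fintype Y] (k : ℕ)
    (MX : MarkovChain X) (MY : MarkovChain Y) (C : X × Y → ℝ) : ℝ :=
  dOTM (diracN k) MX MY C

/-- The `t`-step transition kernel. -/
noncomputable def kpow {X : Type*} [Fintype X] [DecidableEq X]
    (m : X → X → ℝ) : ℕ → X → X → ℝ
  | 0 => fun x x' => if x = x' then 1 else 0
  | t + 1 => fun x x' => ∑ y, m x y * kpow m t y x'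

/-- A transition kernel is irreducible if every state can reach every state in
some positive finite number of steps. -/
def KernelIrreducible {X : Type*} [Fintype X] [DecidableEq X] (m : X → X → ℝ) : Prop :=
  ∀ x x', ∃ t, 1 ≤ t ∧ 0 < kpow m t x x'

/-- A transition kernel is aperiodic if for every state the gcd of its return
times is `1` (i.e. every common divisor of the return times is `1`). -/
def KernelAperiodic {X : Type*} [Fintype X] [DecidableEq X] (m : X → X → ℝ) : Prop :=
  ∀ x, ∀ d : ℕ, (∀ t, 1 ≤ t → 0 < kpow m t x x → d ∣ t) → d = 1

/-- `μ` is stationary for the transition kernel `m`. -/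
def IsStationaryFor {X : Type*} [Fintype X] (m : X → X → ℝ) (μ : X → ℝ) : Prop :=
  ∀ x', ∑ x, m x x' * μ x = μ x'

open Matrix Kronecker

section ProbabilityVectors

variable {Z : Type*} [Fintype Z] {p : Z → ℝ}

lemma IsProb.le_one (hp : IsProb p) (z : Z) : p z ≤ 1 :=
  hp.2 ▸ Finset.single_le_sum (fun z _ => hp.1 z) (Finset.mem_univ z)

lemma IsProb.sum_mul_le (hp : IsProb p) {C : Z → ℝ} (hC : ∀ z, 0 ≤ C z) :
    ∑ z, C z * p z ≤ ∑ z, C z :=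
  Finset.sum_le_sum fun z _ => mul_le_of_le_one_right (hC z) (hp.le_one z)

lemma IsProb.residual {Φ u : Z → ℝ} (hΦ : IsProb Φ) (hu : IsProb u) {lam : ℝ} (hl0 : 0 < lam)
    (hl1 : lam < 1) (hle : ∀ z, lam ≤ Φ z) : IsProb fun z => (Φ z - lam * u z) / (1 - lam) := by
  refine ⟨fun z => div_nonneg ?_ (by linarith), ?_⟩
  · nlinarith [hle z, hu.le_one z]
  · rw [← Finset.sum_div, Finset.sum_sub_distrib, ← Finset.mul_sum, hΦ.2, hu.2, mul_one,
      div_self (by linarith)]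

end ProbabilityVectors

lemma exists_pos_lt_one_forall_le {ι : Type*} [Finite ι] {f : ι → ℝ} (hf : ∀ i, 0 < f i) :
    ∃ c, 0 < c ∧ c < 1 ∧ ∀ i, c ≤ f i := by
  cases isEmpty_or_nonempty ι
  · exact ⟨1 / 2, by norm_num, by norm_num, isEmptyElim⟩
  · obtain ⟨i₀, hi₀⟩ := Finite.exists_min f
    exact ⟨min (f i₀) (1 / 2), lt_min (hf i₀) (by norm_num),
      (min_le_right _ _).trans_lt (by norm_num), fun i => (min_le_left _ _).trans (hi₀ i)⟩

section KernelPowers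

variable {X : Type*} [Fintype X] [DecidableEq X] {m : X → X → ℝ}

lemma kpow_eq_pow (m : X → X → ℝ) : ∀ t, kpow m t = Matrix.of m ^ t
  | 0 => by ext x x'; simp [kpow, one_apply]
  | t + 1 => by ext x x'; simp [kpow, kpow_eq_pow m t, pow_succ', mul_apply]

lemma of_mem_rowStochastic (hm : ∀ x, IsProb (m x)) : Matrix.of m ∈ rowStochastic ℝ X :=
  mem_rowStochastic_iff_sum.2 ⟨fun x => (hm x).1, fun x => (hm x).2⟩

lemma kpow_nonneg (hm : ∀ x, IsProb (m x)) (t : ℕ) (x x' : X) : 0 ≤ kpow m t x x' := by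
  rw [kpow_eq_pow]
  exact nonneg_of_mem_rowStochastic (pow_mem (of_mem_rowStochastic hm) t)

lemma kpow_add (a b : ℕ) (x z : X) :
    kpow m (a + b) x z = ∑ y, kpow m a x y * kpow m b y z := by
  simp only [kpow_eq_pow, pow_add, mul_apply]

lemma mul_le_kpow_add (hm : ∀ x, IsProb (m x)) (a b : ℕ) (x y z : X) :
    kpow m a x y * kpow m b y z ≤ kpow m (a + b) x z := by
  rw [kpow_add]
  exact Finset.single_le_sum (f := fun y => kpow m a x y * kpow m b y z)
    (fun y _ => mul_nonneg (kpow_nonneg hm _ _ _) (kpow_nonneg hm _ _ _)) (Finset.mem_univ y)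

lemma kpow_pos_add (hm : ∀ x, IsProb (m x)) {a b : ℕ} {x y z : X}
    (ha : 0 < kpow m a x y) (hb : 0 < kpow m b y z) : 0 < kpow m (a + b) x z :=
  (mul_pos ha hb).trans_le (mul_le_kpow_add hm a b x y z)

/-- The return times to `x` form an additive submonoid of `ℕ` whose gcd is `1`, so they contain
every large enough integer. -/
lemma eventually_kpow_self_pos (hm : ∀ x, IsProb (m x)) (haper : KernelAperiodic m) (x : X) :
    ∀ᶠ t in atTop, 0 < kpow m t x x := by
  set S : Set ℕ := {t | 0 < kpow m t x x}
  have hgcd : Nat.setGcd S = 1 := haper x _ fun t _ ht => Nat.setGcd_dvd_of_mem ht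
  obtain ⟨N, hN⟩ := Nat.exists_mem_closure_of_ge S
  refine eventually_atTop.2 ⟨N, fun t ht => ?_⟩
  have hmem := hN t ht (hgcd ▸ one_dvd t)
  clear ht
  induction hmem using AddSubmonoid.closure_induction with
  | mem t ht => exact ht
  | zero => simp [kpow]
  | add a b _ _ ha hb => exact kpow_pos_add hm ha hb

lemma eventually_forall_kpow_pos (hm : ∀ x, IsProb (m x)) (hirr : KernelIrreducible m)
    (haper : KernelAperiodic m) : ∀ᶠ t in atTop, ∀ x x', 0 < kpow m t x x' := by
  simp only [eventually_all]
  intro x x'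
  obtain ⟨T, -, hT⟩ := hirr x x'
  filter_upwards [(tendsto_sub_atTop_nat T).eventually (eventually_kpow_self_pos hm haper x),
    eventually_ge_atTop T] with t hreturn hTt
  simpa [Nat.sub_add_cancel hTt] using kpow_pos_add hm hreturn hT

end KernelPowers

section Couplings

variable {X Y : Type*} [Fintype X] [Fintype Y]

def IsTransCoupling (mX : X → X → ℝ) (mY : Y → Y → ℝ) (τ : ℕ → X × Y → X × Y → ℝ) : Prop :=
  ∀ t v, IsCoupling (τ t v) (mX v.1) (mY v.2)

lemma IsCoupling.sum_eq {μ : X × Y → ℝ} {α : X → ℝ} {β : Y → ℝ} (h : IsCoupling μ α β) :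
    ∑ z, μ z = ∑ x, α x := by
  rw [Fintype.sum_prod_type]
  exact Finset.sum_congr rfl fun x _ => h.2.1 x

lemma IsCoupling.isProb {μ : X × Y → ℝ} {α : X → ℝ} {β : Y → ℝ} (h : IsCoupling μ α β)
    (hα : IsProb α) : IsProb μ :=
  ⟨h.1, h.sum_eq.trans hα.2⟩

lemma isCoupling_mul {p : X → ℝ} {q : Y → ℝ} (hp : IsProb p) (hq : IsProb q) :
    IsCoupling (fun z => p z.1 * q z.2) p q :=
  ⟨fun z => mul_nonneg (hp.1 z.1) (hq.1 z.2),
    fun x => by simp only [← Finset.mul_sum, hq.2, mul_one],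
    fun y => by simp only [← Finset.sum_mul, hp.2, one_mul]⟩

lemma IsCoupling.combo {μ ν : X × Y → ℝ} {α : X → ℝ} {β : Y → ℝ} {a b : ℝ} (ha : 0 ≤ a)
    (hb : 0 ≤ b) (hab : a + b ≠ 0) (hμ : IsCoupling μ α β) (hν : IsCoupling ν α β) :
    IsCoupling (fun z => (a * μ z + b * ν z) / (a + b)) α β := by
  refine ⟨fun z => div_nonneg (by nlinarith [hμ.1 z, hν.1 z]) (by positivity),
    fun x => ?_, fun y => ?_⟩
  · simp only [← Finset.sum_div, Finset.sum_add_distrib, ← Finset.mul_sum, hμ.2.1, hν.2.1]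
    field_simp
  · simp only [← Finset.sum_div, Finset.sum_add_distrib, ← Finset.mul_sum, hμ.2.2, hν.2.2]
    field_simp

variable {mX : X → X → ℝ} {mY : Y → Y → ℝ} {τ : ℕ → X × Y → X × Y → ℝ} {w : X × Y → ℝ}

lemma lawAux_nonneg (hw : ∀ z, 0 ≤ w z) (hτ : IsTransCoupling mX mY τ) :
    ∀ t z, 0 ≤ lawAux w τ t z
  | 0, z => hw z
  | t + 1, z => Finset.sum_nonneg fun v _ => mul_nonneg ((hτ t v).1 z) (lawAux_nonneg hw hτ t v)

lemma IsProb.lawAux (hw : IsProb w) (hmX : ∀ x, IsProb (mX x)) (hτ : IsTransCoupling mX mY τ) :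
    ∀ t, IsProb (lawAux w τ t)
  | 0 => hw
  | t + 1 => by
    refine ⟨lawAux_nonneg hw.1 hτ (t + 1), ?_⟩
    simp only [_root_.lawAux]
    rw [Finset.sum_comm]
    simp only [← Finset.sum_mul, ((hτ t _).isProb (hmX _)).2, one_mul]
    exact (hw.lawAux hmX hτ t).2

lemma lawAux_add (s : ℕ) : ∀ j, lawAux w τ (s + j) = lawAux (lawAux w τ s) (fun t => τ (s + t)) j
  | 0 => rfl
  | j + 1 => by
    funext z
    simp only [_root_.lawAux, ← lawAux_add s j]
    rfl

lemma IsCoupling.lawAux_of_isStationaryFor {p : X → ℝ} {q : Y → ℝ} (hw : IsCoupling w p q)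
    (hτ : IsTransCoupling mX mY τ) (hp : IsStationaryFor mX p) (hq : IsStationaryFor mY q) :
    ∀ t, IsCoupling (lawAux w τ t) p q
  | 0 => hw
  | t + 1 => by
    have ih := hw.lawAux_of_isStationaryFor hτ hp hq t
    refine ⟨lawAux_nonneg hw.1 hτ (t + 1), fun x' => ?_, fun y' => ?_⟩
    · simp only [_root_.lawAux]
      rw [Finset.sum_comm]
      simp only [← Finset.sum_mul, (hτ t _).2.1, Fintype.sum_prod_type, ← Finset.mul_sum, ih.2.1]
      exact hp x'
    · simp only [_root_.lawAux]
      rw [Finset.sum_comm]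
      simp only [← Finset.sum_mul, (hτ t _).2.2, Fintype.sum_prod_type]
      rw [Finset.sum_comm]
      simp only [← Finset.mul_sum, ih.2.2]
      exact hq y'

def concatTrans (s : ℕ) (τ₁ τ₂ : ℕ → X × Y → X × Y → ℝ) : ℕ → X × Y → X × Y → ℝ :=
  fun t => if t < s then τ₁ t else τ₂ (t - s)

lemma IsTransCoupling.concat {τ₁ τ₂ : ℕ → X × Y → X × Y → ℝ} (h₁ : IsTransCoupling mX mY τ₁)
    (h₂ : IsTransCoupling mX mY τ₂) (s : ℕ) : IsTransCoupling mX mY (concatTrans s τ₁ τ₂) := by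
  intro t v
  unfold concatTrans
  split_ifs
  exacts [h₁ t v, h₂ _ v]

lemma lawAux_concatTrans_of_le {τ₁ τ₂ : ℕ → X × Y → X × Y → ℝ} {s : ℕ} :
    ∀ t, t ≤ s → lawAux w (concatTrans s τ₁ τ₂) t = lawAux w τ₁ t
  | 0, _ => rfl
  | t + 1, h => by
    funext z
    simp only [_root_.lawAux]
    rw [lawAux_concatTrans_of_le t (by omega)]
    simp only [concatTrans, if_pos (show t < s by omega)]

lemma lawAux_concatTrans {τ₁ τ₂ : ℕ → X × Y → X × Y → ℝ} (s j : ℕ) :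
    lawAux w (concatTrans s τ₁ τ₂) (s + j) = lawAux (lawAux w τ₁ s) τ₂ j := by
  rw [lawAux_add, lawAux_concatTrans_of_le s le_rfl]
  congr
  funext t
  simp [concatTrans]

/-- Weighting the two couplings at each state by the mass the two laws put there is what makes the
law of the mixture the mixture of the laws. -/
noncomputable def mixTrans (a b : ℝ) (u r : X × Y → ℝ) (τu τr : ℕ → X × Y → X × Y → ℝ) :
    ℕ → X × Y → X × Y → ℝ :=
  fun t v =>
    if a * lawAux u τu t v + b * lawAux r τr t v = 0 then τu t v
    else fun z => (a * lawAux u τu t v * τu t v z + b * lawAux r τr t v * τr t v z) /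
      (a * lawAux u τu t v + b * lawAux r τr t v)

section Mix

variable {a b : ℝ} {u r : X × Y → ℝ} {τu τr : ℕ → X × Y → X × Y → ℝ}

lemma IsTransCoupling.mixTrans (ha : 0 ≤ a) (hb : 0 ≤ b) (hu : ∀ z, 0 ≤ u z) (hr : ∀ z, 0 ≤ r z)
    (hτu : IsTransCoupling mX mY τu) (hτr : IsTransCoupling mX mY τr) :
    IsTransCoupling mX mY (mixTrans a b u r τu τr) := by
  intro t v
  unfold _root_.mixTrans
  split_ifs with h
  · exact hτu t v
  · exact (hτu t v).combo (mul_nonneg ha (lawAux_nonneg hu hτu t v))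
      (mul_nonneg hb (lawAux_nonneg hr hτr t v)) h (hτr t v)

lemma mixTrans_mul (ha : 0 ≤ a) (hb : 0 ≤ b) (hu : ∀ z, 0 ≤ u z) (hr : ∀ z, 0 ≤ r z)
    (hτu : IsTransCoupling mX mY τu) (hτr : IsTransCoupling mX mY τr) (t : ℕ) (v z : X × Y) :
    mixTrans a b u r τu τr t v z * (a * lawAux u τu t v + b * lawAux r τr t v) =
      a * lawAux u τu t v * τu t v z + b * lawAux r τr t v * τr t v z := by
  unfold mixTrans
  split_ifs with h
  · obtain ⟨hu0, hr0⟩ := (add_eq_zero_iff_of_nonneg (mul_nonneg ha (lawAux_nonneg hu hτu t v))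
      (mul_nonneg hb (lawAux_nonneg hr hτr t v))).1 h
    simp [hu0, hr0]
  · exact div_mul_cancel₀ _ h

lemma lawAux_mixTrans (ha : 0 ≤ a) (hb : 0 ≤ b) (hu : ∀ z, 0 ≤ u z) (hr : ∀ z, 0 ≤ r z)
    (hτu : IsTransCoupling mX mY τu) (hτr : IsTransCoupling mX mY τr) :
    ∀ j, lawAux (fun z => a * u z + b * r z) (mixTrans a b u r τu τr) j =
      fun z => a * lawAux u τu j z + b * lawAux r τr j z
  | 0 => rfl
  | j + 1 => by
    funext z
    simp only [_root_.lawAux, lawAux_mixTrans ha hb hu hr hτu hτr j,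
      mixTrans_mul ha hb hu hr hτu hτr, Finset.mul_sum, ← Finset.sum_add_distrib]
    exact Finset.sum_congr rfl fun v _ => by ring

end Mix

end Couplings

section Coalescence

variable {X Y : Type*} [Fintype X] [Fintype Y] {mX : X → X → ℝ} {mY : Y → Y → ℝ}

/-- Whatever the initial law `w`, after each block of `s` steps of `τ₀` a fraction `lam` of the
remaining mass can be glued onto the trajectory of `(ρ, τ')`. -/
theorem exists_isTransCoupling_cost_le (hmX : ∀ x, IsProb (mX x))
    {τ₀ : ℕ → X × Y → X × Y → ℝ} (hτ₀ : IsTransCoupling mX mY τ₀) {s : ℕ} {lam : ℝ}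
    (hl0 : 0 < lam) (hl1 : lam < 1) (hmin : ∀ w, IsProb w → ∀ z, lam ≤ lawAux w τ₀ s z)
    {C : X × Y → ℝ} (hC : ∀ z, 0 ≤ C z) (n : ℕ) :
    ∀ d, n * s ≤ d → ∀ w ρ, IsProb w → IsProb ρ →
      ∀ τ', IsTransCoupling mX mY τ' → ∃ τ, IsTransCoupling mX mY τ ∧
        ∑ z, C z * lawAux w τ d z ≤ ∑ z, C z * lawAux ρ τ' d z + (1 - lam) ^ n * ∑ z, C z := by
  induction n with
  | zero =>
    intro d _ w ρ hw hρ τ' hτ'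
    refine ⟨τ', hτ', ?_⟩
    have hρ' : 0 ≤ ∑ z, C z * lawAux ρ τ' d z :=
      Finset.sum_nonneg fun z _ => mul_nonneg (hC z) ((hρ.lawAux hmX hτ' d).1 z)
    linarith [(hw.lawAux hmX hτ' d).sum_mul_le hC, pow_zero (1 - lam)]
  | succ n ih =>
    intro d hd w ρ hw hρ τ' hτ'
    obtain ⟨d, rfl⟩ :=
      Nat.exists_eq_add_of_le (le_trans (Nat.le_mul_of_pos_left s n.succ_pos) hd)
    set u := lawAux ρ τ' s
    set r := fun z => (lawAux w τ₀ s z - lam * u z) / (1 - lam)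
    have hu : IsProb u := hρ.lawAux hmX hτ' s
    have hr : IsProb r := (hw.lawAux hmX hτ₀ s).residual hu hl0 hl1 (hmin w hw)
    have hτu : IsTransCoupling mX mY fun t => τ' (s + t) := fun t => hτ' (s + t)
    obtain ⟨τr, hτr, hcost⟩ := ih d (by nlinarith) r u hr hu _ hτu
    have hΦ : lawAux w τ₀ s = fun z => lam * u z + (1 - lam) * r z := by
      funext z
      simp only [r]
      field_simp [show 1 - lam ≠ 0 by linarith]
      ring
    refine ⟨concatTrans s τ₀ (mixTrans lam (1 - lam) u r (fun t => τ' (s + t)) τr),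
      hτ₀.concat (hτu.mixTrans hl0.le (by linarith) hu.1 hr.1 hτr) s, ?_⟩
    rw [lawAux_concatTrans, hΦ, lawAux_mixTrans hl0.le (by linarith) hu.1 hr.1 hτu hτr,
      lawAux_add s d]
    calc ∑ z, C z * (lam * lawAux u _ d z + (1 - lam) * lawAux r τr d z)
        = lam * ∑ z, C z * lawAux u _ d z + (1 - lam) * ∑ z, C z * lawAux r τr d z := by
          simp only [Finset.mul_sum, ← Finset.sum_add_distrib]
          exact Finset.sum_congr rfl fun z _ => by ring
      _ ≤ lam * ∑ z, C z * lawAux u _ d z +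
            (1 - lam) * (∑ z, C z * lawAux u _ d z + (1 - lam) ^ n * ∑ z, C z) := by
          gcongr
      _ = _ := by ring

end Coalescence

section ProductCoupling

variable {X Y : Type*} [Fintype X] [Fintype Y] {mX : X → X → ℝ} {mY : Y → Y → ℝ}

def prodTrans (mX : X → X → ℝ) (mY : Y → Y → ℝ) : ℕ → X × Y → X × Y → ℝ :=
  fun _ v z => mX v.1 z.1 * mY v.2 z.2

lemma isTransCoupling_prodTrans (hmX : ∀ x, IsProb (mX x)) (hmY : ∀ y, IsProb (mY y)) :
    IsTransCoupling mX mY (prodTrans mX mY) :=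
  fun _ v => isCoupling_mul (hmX v.1) (hmY v.2)

variable [DecidableEq X] [DecidableEq Y]

lemma lawAux_const (w : X × Y → ℝ) (K : X × Y → X × Y → ℝ) :
    ∀ t, lawAux w (fun _ => K) t = w ᵥ* Matrix.of K ^ t
  | 0 => by simp [lawAux]
  | t + 1 => by
    rw [pow_succ, ← vecMul_vecMul, ← lawAux_const w K t]
    funext z
    simp only [lawAux, vecMul, dotProduct, of_apply, mul_comm]

lemma kronecker_pow {m n α : Type*} [Fintype m] [Fintype n] [DecidableEq m] [DecidableEq n]
    [CommSemiring α] (A : Matrix m m α) (B : Matrix n n α) :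
    ∀ t, (A ⊗ₖ B) ^ t = (A ^ t) ⊗ₖ (B ^ t)
  | 0 => by simp
  | t + 1 => by rw [pow_succ, kronecker_pow A B t, ← mul_kronecker_mul, ← pow_succ, ← pow_succ]

lemma lawAux_prodTrans (w : X × Y → ℝ) (t : ℕ) (z : X × Y) :
    lawAux w (prodTrans mX mY) t z = ∑ v, w v * (kpow mX t v.1 z.1 * kpow mY t v.2 z.2) := by
  have hK : Matrix.of (prodTrans mX mY 0) = Matrix.of mX ⊗ₖ Matrix.of mY := rfl
  rw [show prodTrans mX mY = fun _ => prodTrans mX mY 0 from rfl, lawAux_const, hK,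
    kronecker_pow, kpow_eq_pow, kpow_eq_pow]
  rfl

theorem exists_prodTrans_minorization (hmX : ∀ x, IsProb (mX x)) (hmY : ∀ y, IsProb (mY y))
    (hirrX : KernelIrreducible mX) (haperX : KernelAperiodic mX)
    (hirrY : KernelIrreducible mY) (haperY : KernelAperiodic mY) :
    ∃ s, 0 < s ∧ ∃ lam, 0 < lam ∧ lam < 1 ∧
      ∀ w, IsProb w → ∀ z, lam ≤ lawAux w (prodTrans mX mY) s z := by
  obtain ⟨s, hX, hY, hs⟩ := ((eventually_forall_kpow_pos hmX hirrX haperX).and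
    ((eventually_forall_kpow_pos hmY hirrY haperY).and (eventually_gt_atTop 0))).exists
  obtain ⟨lam, hl0, hl1, hlam⟩ := exists_pos_lt_one_forall_le
    (f := fun vz : (X × Y) × (X × Y) => kpow mX s vz.1.1 vz.2.1 * kpow mY s vz.1.2 vz.2.2)
    fun vz => mul_pos (hX _ _) (hY _ _)
  refine ⟨s, hs, lam, hl0, hl1, fun w hw z => ?_⟩
  calc lam = ∑ v, w v * lam := by rw [← Finset.sum_mul, hw.2, one_mul]
    _ ≤ _ := Finset.sum_le_sum fun v _ => mul_le_mul_of_nonneg_left (hlam (v, z)) (hw.1 v)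
    _ = _ := (lawAux_prodTrans w s z).symm

end ProductCoupling

section WLDistance

variable {X Y : Type*} [Fintype X] [Fintype Y]

instance (MX : MarkovChain X) (MY : MarkovChain Y) : Nonempty (MarkovCoupling MX MY) :=
  ⟨⟨_, prodTrans MX.kernel MY.kernel, isCoupling_mul MX.init_prob MY.init_prob,
    isTransCoupling_prodTrans MX.kernel_prob MY.kernel_prob⟩⟩

lemma MarkovCoupling.isProb_law {MX : MarkovChain X} {MY : MarkovChain Y}
    (π : MarkovCoupling MX MY) (t : ℕ) : IsProb (π.law t) :=
  (π.init_coupling.isProb MX.init_prob).lawAux MX.kernel_prob π.trans_coupling t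

variable {MX : MarkovChain X} {MY : MarkovChain Y} {C : X × Y → ℝ}

lemma dWL_eq_iInf (k : ℕ) : dWL k MX MY C = ⨅ π : MarkovCoupling MX MY, ∑ z, C z * π.law k z := by
  refine iInf_congr fun π => ?_
  rw [tsum_eq_single k fun t ht => by simp [diracN, ht]]
  simp [diracN]

lemma dWL_le_cost (hC : ∀ z, 0 ≤ C z) (k : ℕ) (π : MarkovCoupling MX MY) :
    dWL k MX MY C ≤ ∑ z, C z * π.law k z := by
  rw [dWL_eq_iInf]
  refine ciInf_le ⟨0, ?_⟩ π
  rintro _ ⟨π', rfl⟩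
  exact Finset.sum_nonneg fun z _ => mul_nonneg (hC z) ((π'.isProb_law k).1 z)

lemma dWL_le_sum (hC : ∀ z, 0 ≤ C z) (k : ℕ) : dWL k MX MY C ≤ ∑ z, C z :=
  (dWL_le_cost hC k (Classical.arbitrary _)).trans ((MarkovCoupling.isProb_law _ k).sum_mul_le hC)

lemma dWL_le_dWL_succ_of_isStationaryFor {mX : X → X → ℝ} {mY : Y → Y → ℝ}
    (hmX : ∀ x, IsProb (mX x)) (hmY : ∀ y, IsProb (mY y)) {μX : X → ℝ} {μY : Y → ℝ}
    (hμX : IsProb μX) (hμY : IsProb μY) (hstatX : IsStationaryFor mX μX)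
    (hstatY : IsStationaryFor mY μY) (hC : ∀ z, 0 ≤ C z) (k : ℕ) :
    dWL k ⟨mX, μX, hmX, hμX⟩ ⟨mY, μY, hmY, hμY⟩ C ≤
      dWL (k + 1) ⟨mX, μX, hmX, hμX⟩ ⟨mY, μY, hmY, hμY⟩ C := by
  rw [dWL_eq_iInf (k + 1)]
  refine le_ciInf fun π => ?_
  have hlaw : π.law (k + 1) = lawAux (π.law 1) (fun t => π.trans (1 + t)) k := by
    rw [add_comm]
    exact lawAux_add 1 k
  exact (dWL_le_cost hC k ⟨π.law 1, fun t => π.trans (1 + t),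
    π.init_coupling.lawAux_of_isStationaryFor π.trans_coupling hstatX hstatY 1,
    fun t => π.trans_coupling (1 + t)⟩).trans_eq (by rw [hlaw]; rfl)

lemma dWL_le_dWL_add_pow {mX : X → X → ℝ} {mY : Y → Y → ℝ}
    (hmX : ∀ x, IsProb (mX x)) (hmY : ∀ y, IsProb (mY y)) {τ₀ : ℕ → X × Y → X × Y → ℝ}
    (hτ₀ : IsTransCoupling mX mY τ₀) {s : ℕ} {lam : ℝ} (hl0 : 0 < lam) (hl1 : lam < 1)
    (hmin : ∀ w, IsProb w → ∀ z, lam ≤ lawAux w τ₀ s z) (hC : ∀ z, 0 ≤ C z)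
    {p p' : X → ℝ} {q q' : Y → ℝ} (hp : IsProb p) (hq : IsProb q) (hp' : IsProb p')
    (hq' : IsProb q') (K : ℕ) :
    dWL K ⟨mX, p', hmX, hp'⟩ ⟨mY, q', hmY, hq'⟩ C ≤
      dWL K ⟨mX, p, hmX, hp⟩ ⟨mY, q, hmY, hq⟩ C + (1 - lam) ^ (K / s) * ∑ z, C z := by
  rw [← sub_le_iff_le_add, dWL_eq_iInf K (MX := ⟨mX, p, hmX, hp⟩)]
  refine le_ciInf fun π => sub_le_iff_le_add.2 ?_
  have hw := isCoupling_mul hp' hq'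
  obtain ⟨τ, hτ, hcost⟩ := exists_isTransCoupling_cost_le hmX hτ₀ hl0 hl1 hmin hC (K / s) K
    (Nat.div_mul_le_self K s) _ π.init (hw.isProb hp') (π.init_coupling.isProb hp) π.trans
    π.trans_coupling
  let π' : MarkovCoupling ⟨mX, p', hmX, hp'⟩ ⟨mY, q', hmY, hq'⟩ := ⟨_, τ, hw, hτ⟩
  exact (dWL_le_cost hC K π').trans hcost

end WLDistance

theorem stmt16_general {X : Type*} [Fintype X] [DecidableEq X]
    (dX : X → X → ℝ) (hdX : IsPseudometric dX)
    (mX mY : X → X → ℝ)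
    (hmX : ∀ x, IsProb (mX x)) (hmY : ∀ x, IsProb (mY x))
    (hirrX : KernelIrreducible mX) (haperX : KernelAperiodic mX)
    (hirrY : KernelIrreducible mY) (haperY : KernelAperiodic mY)
    (μX μY : X → ℝ) (hμX : IsProb μX) (hμY : IsProb μY)
    (hstatX : IsStationaryFor mX μX) (hstatY : IsStationaryFor mY μY) :
    ∃ c : ℝ,
      (∀ (νX νY : X → ℝ) (hνX : IsProb νX) (hνY : IsProb νY),
        Tendsto (fun k =>
            dWL k (⟨mX, νX, hmX, hνX⟩ : MarkovChain X)
              (⟨mY, νY, hmY, hνY⟩ : MarkovChain X)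
              (fun z : X × X => dX z.1 z.2)) atTop (𝓝 c)) ∧
      Tendsto (fun k =>
          dWL k (⟨mX, μX, hmX, hμX⟩ : MarkovChain X)
            (⟨mY, μY, hmY, hμY⟩ : MarkovChain X)
            (fun z : X × X => dX z.1 z.2)) atTop (𝓝 c) := by
  set C : X × X → ℝ := fun z => dX z.1 z.2
  have hC : ∀ z, 0 ≤ C z := fun z => hdX.1 z.1 z.2
  obtain ⟨s, hs, lam, hl0, hl1, hmin⟩ :=
    exists_prodTrans_minorization hmX hmY hirrX haperX hirrY haperY
  have hτ₀ := isTransCoupling_prodTrans hmX hmY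
  set g := fun k => dWL k ⟨mX, μX, hmX, hμX⟩ ⟨mY, μY, hmY, hμY⟩ C
  have hg : Tendsto g atTop (𝓝 (⨆ k, g k)) := tendsto_atTop_ciSup
    (monotone_nat_of_le_succ
      (dWL_le_dWL_succ_of_isStationaryFor hmX hmY hμX hμY hstatX hstatY hC))
    ⟨∑ z, C z, by rintro _ ⟨k, rfl⟩; exact dWL_le_sum hC k⟩
  have herr : Tendsto (fun k => (1 - lam) ^ (k / s) * ∑ z, C z) atTop (𝓝 0) := by
    simpa using ((tendsto_pow_atTop_nhds_zero_of_lt_one (by linarith) (by linarith)).comp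
      (Nat.tendsto_div_const_atTop hs.ne')).mul_const (∑ z, C z)
  refine ⟨_, fun νX νY hνX hνY => ?_, hg⟩
  refine tendsto_of_tendsto_of_tendsto_of_le_of_le (by simpa using hg.sub herr)
    (by simpa using hg.add herr) (fun k => ?_) (fun k => ?_)
  · exact sub_le_iff_le_add.2
      (dWL_le_dWL_add_pow hmX hmY hτ₀ hl0 hl1 hmin hC hνX hνY hμX hμY k)
  · exact dWL_le_dWL_add_pow hmX hmY hτ₀ hl0 hl1 hmin hC hμX hμY hνX hνY k

/-- For irreducible aperiodic kernels with pseudometric cost, the limit of the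
depth-`k` WL distances exists and does not depend on the initial distributions;
in particular it equals the limit for the stationary initial distributions. -/
theorem stmt16 {X : Type*} [Fintype X] [DecidableEq X]
    (dX : X → X → ℝ) (hdX : IsPseudometric dX)
    (mX mY : X → X → ℝ)
    (hmX : ∀ x, IsProb (mX x)) (hmY : ∀ x, IsProb (mY x))
    (hirrX : KernelIrreducible mX) (haperX : KernelAperiodic mX)
    (hirrY : KernelIrreducible mY) (haperY : KernelAperiodic mY)
    (μX μY : X → ℝ) (hμX : IsProb μX) (hμY : IsProb μY)
    (hstatX : IsStationaryFor mX μX) (hstatY : IsStationaryFor mY μY)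
    (huniqX : ∀ μ, IsProb μ → IsStationaryFor mX μ → μ = μX)
    (huniqY : ∀ μ, IsProb μ → IsStationaryFor mY μ → μ = μY) :
    ∃ c : ℝ,
      (∀ (νX νY : X → ℝ) (hνX : IsProb νX) (hνY : IsProb νY),
        Tendsto (fun k =>
            dWL k (⟨mX, νX, hmX, hνX⟩ : MarkovChain X)
              (⟨mY, νY, hmY, hνY⟩ : MarkovChain X)
              (fun z : X × X => dX z.1 z.2)) atTop (𝓝 c)) ∧
      Tendsto (fun k =>
          dWL k (⟨mX, μX, hmX, hμX⟩ : MarkovChain X)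
            (⟨mY, μY, hmY, hμY⟩ : MarkovChain X)
            (fun z : X × X => dX z.1 z.2)) atTop (𝓝 c) :=
  stmt16_general dX hdX mX mY hmX hmY hirrX haperX hirrY haperY μX μY hμX hμY hstatX hstatY
end
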